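/- arXiv:2505.19411 — 5 statements merged into one kernel-verified Lean document; each statement's English description precedes it below -/
import Mathlib

section
/- Let P_A denote the orthogonal (Euclidean) projection onto the nonempty closed affine set A, let λ_max(Φ) be the largest eigenvalue of Φ, and fix a step size α with 0 < α < 1/λ_max(Φ). For any initial guess w_1 ∈ ℝ^N, define the projected-gradient iteration w_{k+1} = P_A( w_k − 2α Π_fᵀ (I_{T_f} ⊗ Φ)(Π_f w_k − w_ref) ) for k ≥ 1. Then the sequence {w_k} converges to the unique point w* ∈ A satisfying h(w*) ≤ h(w) for all w ∈ A (the unique global optimum of the finite-horizon LQT problem). -/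
/-!
On the affine set `A` the objective `h` is strongly convex: two points of `A` agree on the first
block, so `‖Π_f (x - y)‖ = ‖x - y‖` and `h` grows at least like `λ_min(Φ) ‖x - y‖²` away from a
point satisfying the first-order condition. The gradient `2 Π_fᵀ (I ⊗ Φ) (Π_f w - w_ref)` is
Lipschitz with constant `2 λ_max(Φ)`, so for `α < 1 / λ_max(Φ)` the gradient step contracts `A`
with factor `√(1 - 4 α λ_min (1 - α λ_max))`, and the metric projection onto the convex set `A`
is nonexpansive. By Banach's fixed point theorem the iterates converge to the fixed point `w*`
of the projected step; the variational inequality of the projection at `w*` is the first-order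
condition, so `w*` is the unique minimizer.
-/

open scoped RealInnerProductSpace
open Filter Topology

noncomputable section LQT2

/-- The ambient space ℝ^N with N = q(T_ini + T_f), coordinates indexed by
time (first `Tini` instants, then `Tf` instants) and component in `Fin q`. -/
abbrev Efull (q Tini Tf : ℕ) : Type := EuclideanSpace ℝ ((Fin Tini ⊕ Fin Tf) × Fin q)

/-- ℝ^{q T_ini}. -/
abbrev EiniSp (q Tini : ℕ) : Type := EuclideanSpace ℝ (Fin Tini × Fin q)

/-- ℝ^{q T_f}. -/
abbrev EfSp (q Tf : ℕ) : Type := EuclideanSpace ℝ (Fin Tf × Fin q)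

/-- Π_ini : extraction of the first q T_ini coordinates. -/
def piIni {q Tini Tf : ℕ} (w : Efull q Tini Tf) : EiniSp q Tini :=
  WithLp.toLp 2 (fun p : Fin Tini × Fin q => w (Sum.inl p.1, p.2))

/-- Π_f : extraction of the last q T_f coordinates. -/
def piF {q Tini Tf : ℕ} (w : Efull q Tini Tf) : EfSp q Tf :=
  WithLp.toLp 2 (fun p : Fin Tf × Fin q => w (Sum.inr p.1, p.2))

/-- Π_fᵀ : embedding of ℝ^{q T_f} into ℝ^N (zero on the first block). -/
def piFT {q Tini Tf : ℕ} (v : EfSp q Tf) : Efull q Tini Tf :=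
  WithLp.toLp 2 (fun p : (Fin Tini ⊕ Fin Tf) × Fin q => Sum.elim (fun _ => (0 : ℝ)) (fun t => v (t, p.2)) p.1)

/-- The stacked vector (a, b). -/
def stack {q Tini Tf : ℕ} (a : EiniSp q Tini) (b : EfSp q Tf) : Efull q Tini Tf :=
  WithLp.toLp 2 (fun p : (Fin Tini ⊕ Fin Tf) × Fin q => Sum.elim (fun t => a (t, p.2)) (fun t => b (t, p.2)) p.1)

/-- The action of the Kronecker product I_{T_f} ⊗ Φ on ℝ^{q T_f}. -/
def kronMul {q Tf : ℕ} (Φ : Matrix (Fin q) (Fin q) ℝ) (v : EfSp q Tf) : EfSp q Tf :=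
  WithLp.toLp 2 (fun p : Fin Tf × Fin q => ∑ j, Φ p.2 j * v (p.1, j))

/-- ‖v‖²_{I ⊗ Φ} = vᵀ (I_{T_f} ⊗ Φ) v. -/
def wnormSq {q Tf : ℕ} (Φ : Matrix (Fin q) (Fin q) ℝ) (v : EfSp q Tf) : ℝ :=
  ∑ t : Fin Tf, ∑ i, ∑ j, v (t, i) * Φ i j * v (t, j)

/-- The affine constraint set A = {w ∈ V : Π_ini w = w_ini}. -/
def Aset {q Tini Tf : ℕ} (V : Submodule ℝ (Efull q Tini Tf)) (wini : EiniSp q Tini) :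
    Set (Efull q Tini Tf) :=
  {w | w ∈ V ∧ piIni w = wini}

section

variable {E : Type*} [NormedAddCommGroup E] [InnerProductSpace ℝ E]

def IsMetricProjection (S : Set E) (P : E → E) : Prop :=
  ∀ x, P x ∈ S ∧ ∀ y ∈ S, dist x (P x) ≤ dist x y

namespace IsMetricProjection

variable {S : Set E} {P : E → E}

theorem inner_sub_le_zero (hP : IsMetricProjection S P) (hS : Convex ℝ S) (x : E) {y : E}
    (hy : y ∈ S) : ⟪x - P x, y - P x⟫ ≤ 0 := by
  have hPx := (hP x).1
  have : Nonempty S := ⟨⟨P x, hPx⟩⟩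
  have hbdd : BddBelow (Set.range fun z : S => ‖x - z‖) := ⟨0, by
    rintro _ ⟨z, rfl⟩
    exact norm_nonneg _⟩
  refine (norm_eq_iInf_iff_real_inner_le_zero hS hPx).1
    (le_antisymm (le_ciInf fun z => ?_) (ciInf_le hbdd ⟨P x, hPx⟩)) y hy
  simpa only [dist_eq_norm] using (hP x).2 z z.2

theorem norm_sub_le (hP : IsMetricProjection S P) (hS : Convex ℝ S) (x y : E) :
    ‖P x - P y‖ ≤ ‖x - y‖ := by
  have hx := hP.inner_sub_le_zero hS x (hP y).1
  have hy := hP.inner_sub_le_zero hS y (hP x).1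
  -- the sum of the variational inequalities at `x` and at `y`
  have key : ‖P x - P y‖ ^ 2 ≤ ⟪x - y, P x - P y⟫ := by
    rw [← real_inner_self_eq_norm_sq]
    simp only [inner_sub_left, inner_sub_right] at hx hy ⊢
    rw [real_inner_comm (P x) y, real_inner_comm (P y) (P x), real_inner_comm (P x) x] at *
    linarith
  have := real_inner_le_norm (x - y) (P x - P y)
  nlinarith [norm_nonneg (P x - P y), norm_nonneg (x - y)]

end IsMetricProjection

theorem norm_sub_smul_sq_le (K : E → E) {m M c : ℝ} {v : E} (hm : m * ‖v‖ ^ 2 ≤ ⟪K v, v⟫)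
    (hM : ‖K v‖ ^ 2 ≤ M * ⟪K v, v⟫) (hc : 0 ≤ c * (2 - c * M)) :
    ‖v - c • K v‖ ^ 2 ≤ (1 - c * (2 - c * M) * m) * ‖v‖ ^ 2 := by
  rw [norm_sub_sq_real, norm_smul, real_inner_smul_right, real_inner_comm, mul_pow,
    Real.norm_eq_abs, sq_abs]
  nlinarith [mul_le_mul_of_nonneg_left hM (sq_nonneg c), mul_le_mul_of_nonneg_left hm hc]

end

theorem ContractingWith.of_dist_sq_le {α : Type*} [MetricSpace α] {f : α → α} {κ : ℝ}
    (hκ : κ < 1) (h : ∀ x y, dist (f x) (f y) ^ 2 ≤ κ * dist x y ^ 2) :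
    ContractingWith (√κ).toNNReal f := by
  refine ⟨Real.toNNReal_lt_one.2 ((Real.sqrt_lt' one_pos).2 (by rwa [one_pow])),
    LipschitzWith.of_dist_le_mul fun x y => ?_⟩
  rw [Real.coe_toNNReal _ (Real.sqrt_nonneg κ), ← Real.sqrt_sq dist_nonneg,
    ← Real.sqrt_sq (dist_nonneg (x := x)), ← Real.sqrt_mul' _ (sq_nonneg _)]
  exact Real.sqrt_le_sqrt (h x y)

theorem Function.eq_iterate_of_succ_eq {α : Type*} {f : α → α} {u : ℕ → α}
    (h : ∀ k, 1 ≤ k → u (k + 1) = f (u k)) (n : ℕ) : u (n + 1) = f^[n] (u 1) := by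
  induction n with
  | zero => rfl
  | succ n ih => rw [h _ (Nat.le_add_left 1 n), ih, Function.iterate_succ_apply']

theorem exists_isFixedPt_tendsto_of_dist_sq_le {α : Type*} [MetricSpace α] {s : Set α}
    (hs : IsComplete s) {f : α → α} (hfs : ∀ x, f x ∈ s) {κ : ℝ} (hκ : κ < 1)
    (hf : ∀ x ∈ s, ∀ y ∈ s, dist (f x) (f y) ^ 2 ≤ κ * dist x y ^ 2) {u : ℕ → α}
    (hu : ∀ k, 1 ≤ k → u (k + 1) = f (u k)) :
    ∃ x ∈ s, Function.IsFixedPt f x ∧ Tendsto u atTop (𝓝 x) := by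
  have hmaps : Set.MapsTo f s s := fun x _ => hfs x
  have hK : ContractingWith _ (hmaps.restrict f s s) :=
    ContractingWith.of_dist_sq_le hκ fun x y => hf x x.2 y y.2
  obtain ⟨x, hx, hfix, htendsto, -⟩ :=
    hK.exists_fixedPoint' hs hmaps (hfs (u 1)) (edist_ne_top _ _)
  refine ⟨x, hx, hfix, (tendsto_add_atTop_iff_nat 2).1 ?_⟩
  convert htendsto using 2 with n
  rw [Function.eq_iterate_of_succ_eq hu, Function.iterate_succ_apply]

namespace LinearMap.IsSymmetric

variable {ι E : Type*} [Fintype ι] [NormedAddCommGroup E] [InnerProductSpace ℝ E]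
  {T : E →ₗ[ℝ] E} {b : OrthonormalBasis ι ℝ E} {μ : ι → ℝ}

theorem inner_map_eigenbasis (hT : T.IsSymmetric) (hb : ∀ i, T (b i) = μ i • b i) (v : E)
    (i : ι) : ⟪T v, b i⟫ = μ i * ⟪v, b i⟫ := by
  rw [hT, hb, real_inner_smul_right]

theorem inner_map_self_eq_sum_eigenbasis (hT : T.IsSymmetric) (hb : ∀ i, T (b i) = μ i • b i)
    (v : E) : ⟪T v, v⟫ = ∑ i, μ i * ⟪v, b i⟫ ^ 2 := by
  rw [← b.sum_inner_mul_inner]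
  refine Finset.sum_congr rfl fun i _ => ?_
  rw [hT.inner_map_eigenbasis hb, real_inner_comm (b i)]
  ring

theorem norm_map_sq_eq_sum_eigenbasis (hT : T.IsSymmetric) (hb : ∀ i, T (b i) = μ i • b i)
    (v : E) : ‖T v‖ ^ 2 = ∑ i, μ i ^ 2 * ⟪v, b i⟫ ^ 2 := by
  simp only [← b.sum_sq_inner_left, hT.inner_map_eigenbasis hb, mul_pow]

theorem mul_norm_sq_le_inner_map_self (hT : T.IsSymmetric) (hb : ∀ i, T (b i) = μ i • b i)
    {m : ℝ} (hm : ∀ i, m ≤ μ i) (v : E) : m * ‖v‖ ^ 2 ≤ ⟪T v, v⟫ := by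
  rw [hT.inner_map_self_eq_sum_eigenbasis hb, ← b.sum_sq_inner_left, Finset.mul_sum]
  exact Finset.sum_le_sum fun i _ => mul_le_mul_of_nonneg_right (hm i) (sq_nonneg _)

theorem norm_map_sq_le_mul_inner_map_self (hT : T.IsSymmetric) (hb : ∀ i, T (b i) = μ i • b i)
    {M : ℝ} (h0 : ∀ i, 0 ≤ μ i) (hM : ∀ i, μ i ≤ M) (v : E) : ‖T v‖ ^ 2 ≤ M * ⟪T v, v⟫ := by
  rw [hT.norm_map_sq_eq_sum_eigenbasis hb, hT.inner_map_self_eq_sum_eigenbasis hb,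
    Finset.mul_sum]
  refine Finset.sum_le_sum fun i _ => ?_
  rw [sq (μ i), ← mul_assoc]
  exact mul_le_mul_of_nonneg_right (mul_le_mul_of_nonneg_right (hM i) (h0 i)) (sq_nonneg _)

end LinearMap.IsSymmetric

theorem Matrix.IsHermitian.toEuclideanLin_eigenvectorBasis {n : Type*} [Fintype n]
    [DecidableEq n] {A : Matrix n n ℝ} (hA : A.IsHermitian) (i : n) :
    Matrix.toEuclideanLin A (hA.eigenvectorBasis i) = hA.eigenvalues i • hA.eigenvectorBasis i :=
  WithLp.ofLp_injective 2 (hA.mulVec_eigenvectorBasis i)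

section Blocks

variable {q Tini Tf : ℕ}

theorem inner_eq_inner_piIni_add_inner_piF (x y : Efull q Tini Tf) :
    ⟪x, y⟫ = ⟪piIni x, piIni y⟫ + ⟪piF x, piF y⟫ := by
  simp only [PiLp.inner_apply, RCLike.inner_apply, conj_trivial]
  rw [Fintype.sum_prod_type (f := fun p : (Fin Tini ⊕ Fin Tf) × Fin q => y p * x p),
    Fintype.sum_sum_type, Fintype.sum_prod_type, Fintype.sum_prod_type]
  rfl

theorem norm_eq_norm_piF_of_piIni_eq_zero {d : Efull q Tini Tf} (hd : piIni d = 0) :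
    ‖d‖ = ‖piF d‖ := by
  rw [norm_eq_sqrt_real_inner, norm_eq_sqrt_real_inner, inner_eq_inner_piIni_add_inner_piF, hd,
    inner_zero_left, zero_add]

theorem piIni_piFT (u : EfSp q Tf) : piIni (piFT u : Efull q Tini Tf) = 0 := rfl

theorem inner_piFT_left (u : EfSp q Tf) (d : Efull q Tini Tf) : ⟪piFT u, d⟫ = ⟪u, piF d⟫ := by
  rw [inner_eq_inner_piIni_add_inner_piF, piIni_piFT, inner_zero_left, zero_add]
  rfl

theorem piFT_sub (u v : EfSp q Tf) :
    (piFT (u - v) : Efull q Tini Tf) = piFT u - piFT v := by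
  ext ⟨s | t, i⟩ <;> simp [piFT]

end Blocks

section TimeSlices

variable {q Tf : ℕ} {Φ : Matrix (Fin q) (Fin q) ℝ}

def timeSlice (t : Fin Tf) (v : EfSp q Tf) : EuclideanSpace ℝ (Fin q) :=
  WithLp.toLp 2 fun i => v (t, i)

theorem inner_eq_sum_inner_timeSlice (a b : EfSp q Tf) :
    ⟪a, b⟫ = ∑ t, ⟪timeSlice t a, timeSlice t b⟫ := by
  simp only [PiLp.inner_apply, RCLike.inner_apply, conj_trivial]
  rw [Fintype.sum_prod_type (f := fun p : Fin Tf × Fin q => b p * a p)]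
  rfl

theorem timeSlice_kronMul (v : EfSp q Tf) (t : Fin Tf) :
    timeSlice t (kronMul Φ v) = Matrix.toEuclideanLin Φ (timeSlice t v) := rfl

theorem mul_norm_sq_le_inner_kronMul {m : ℝ}
    (h : ∀ u, m * ‖u‖ ^ 2 ≤ ⟪Matrix.toEuclideanLin Φ u, u⟫) (v : EfSp q Tf) :
    m * ‖v‖ ^ 2 ≤ ⟪kronMul Φ v, v⟫ := by
  simp only [← real_inner_self_eq_norm_sq, inner_eq_sum_inner_timeSlice, Finset.mul_sum,
    timeSlice_kronMul] at h ⊢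
  exact Finset.sum_le_sum fun t _ => h _

theorem norm_kronMul_sq_le {M : ℝ}
    (h : ∀ u, ‖Matrix.toEuclideanLin Φ u‖ ^ 2 ≤ M * ⟪Matrix.toEuclideanLin Φ u, u⟫)
    (v : EfSp q Tf) : ‖kronMul Φ v‖ ^ 2 ≤ M * ⟪kronMul Φ v, v⟫ := by
  simp only [← real_inner_self_eq_norm_sq, inner_eq_sum_inner_timeSlice, Finset.mul_sum,
    timeSlice_kronMul] at h ⊢
  exact Finset.sum_le_sum fun t _ => h _

theorem exists_pos_mul_norm_sq_le_inner_kronMul (hΦ : Φ.PosDef) :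
    ∃ m > 0, ∀ v : EfSp q Tf, m * ‖v‖ ^ 2 ≤ ⟪kronMul Φ v, v⟫ := by
  have hsymm := Matrix.isSymmetric_toEuclideanLin_iff.2 hΦ.1
  have hb := hΦ.1.toEuclideanLin_eigenvectorBasis
  rcases isEmpty_or_nonempty (Fin q) with hq | hq
  · exact ⟨1, one_pos,
      mul_norm_sq_le_inner_kronMul (hsymm.mul_norm_sq_le_inner_map_self hb isEmptyElim)⟩
  obtain ⟨j, hj⟩ := Finite.exists_min hΦ.1.eigenvalues
  exact ⟨_, hΦ.eigenvalues_pos j,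
    mul_norm_sq_le_inner_kronMul (hsymm.mul_norm_sq_le_inner_map_self hb hj)⟩

theorem norm_kronMul_sq_le_of_eigenvalues_le (hΦ : Φ.PosSemidef) {M : ℝ}
    (hM : ∀ i, hΦ.1.eigenvalues i ≤ M) (v : EfSp q Tf) :
    ‖kronMul Φ v‖ ^ 2 ≤ M * ⟪kronMul Φ v, v⟫ := by
  have hsymm := Matrix.isSymmetric_toEuclideanLin_iff.2 hΦ.1
  exact norm_kronMul_sq_le (hsymm.norm_map_sq_le_mul_inner_map_self
    hΦ.1.toEuclideanLin_eigenvectorBasis hΦ.eigenvalues_nonneg hM) v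

theorem inner_kronMul_left (hΦ : (Matrix.toEuclideanLin Φ).IsSymmetric) (a b : EfSp q Tf) :
    ⟪kronMul Φ a, b⟫ = ⟪a, kronMul Φ b⟫ := by
  simp only [inner_eq_sum_inner_timeSlice, timeSlice_kronMul, hΦ _ _]

theorem kronMul_add (a b : EfSp q Tf) : kronMul Φ (a + b) = kronMul Φ a + kronMul Φ b := by
  ext p
  simp [kronMul, mul_add, Finset.sum_add_distrib]

theorem kronMul_sub (a b : EfSp q Tf) : kronMul Φ (a - b) = kronMul Φ a - kronMul Φ b := by
  ext p
  simp [kronMul, mul_sub, Finset.sum_sub_distrib]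

theorem wnormSq_eq_inner (v : EfSp q Tf) : wnormSq Φ v = ⟪kronMul Φ v, v⟫ := by
  simp only [wnormSq, PiLp.inner_apply, RCLike.inner_apply, conj_trivial, kronMul]
  rw [Fintype.sum_prod_type (f := fun p : Fin Tf × Fin q => v p * ∑ j, Φ p.2 j * v (p.1, j))]
  refine Finset.sum_congr rfl fun t _ => Finset.sum_congr rfl fun i _ => ?_
  rw [Finset.mul_sum]
  exact Finset.sum_congr rfl fun j _ => by ring

theorem wnormSq_add (hΦ : (Matrix.toEuclideanLin Φ).IsSymmetric) (a b : EfSp q Tf) :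
    wnormSq Φ (a + b) = wnormSq Φ a + 2 * ⟪kronMul Φ a, b⟫ + wnormSq Φ b := by
  rw [wnormSq_eq_inner, wnormSq_eq_inner, wnormSq_eq_inner, kronMul_add, inner_add_left,
    inner_add_right, inner_add_right, inner_kronMul_left hΦ b a, real_inner_comm (kronMul Φ a) b]
  ring

end TimeSlices

section ConstraintSet

variable {q Tini Tf : ℕ} {V : Submodule ℝ (Efull q Tini Tf)} {wini : EiniSp q Tini}

theorem convex_Aset : Convex ℝ (Aset V wini) := by
  rintro x ⟨hxV, hx⟩ y ⟨hyV, hy⟩ a b - - hab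
  refine ⟨V.add_mem (V.smul_mem a hxV) (V.smul_mem b hyV), ?_⟩
  change a • piIni x + b • piIni y = wini
  rw [hx, hy, ← add_smul, hab, one_smul]

theorem isClosed_Aset : IsClosed (Aset V wini) := by
  refine V.closed_of_finiteDimensional.inter (isClosed_eq ?_ continuous_const)
  unfold piIni
  fun_prop

theorem piIni_sub_eq_zero_of_mem_Aset {x y : Efull q Tini Tf} (hx : x ∈ Aset V wini)
    (hy : y ∈ Aset V wini) : piIni (x - y) = 0 := by
  change piIni x - piIni y = 0
  rw [hx.2, hy.2, sub_self]

end ConstraintSet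

section ProjectedGradient

variable {q Tini Tf : ℕ} {Φ : Matrix (Fin q) (Fin q) ℝ} {wref : EfSp q Tf} {α : ℝ}

/-- The gradient step `w - α ∇h(w)`, with `∇h(w) = 2 Π_fᵀ (I ⊗ Φ) (Π_f w - w_ref)`. -/
def gradStep (Φ : Matrix (Fin q) (Fin q) ℝ) (wref : EfSp q Tf) (α : ℝ) (w : Efull q Tini Tf) :
    Efull q Tini Tf :=
  w - (2 * α) • piFT (kronMul Φ (piF w - wref))

theorem gradStep_sub_gradStep (x y : Efull q Tini Tf) :
    gradStep Φ wref α x - gradStep Φ wref α y =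
      (x - y) - (2 * α) • piFT (kronMul Φ (piF (x - y))) := by
  have h : piFT (kronMul Φ (piF x - wref)) - piFT (kronMul Φ (piF y - wref)) =
      (piFT (kronMul Φ (piF (x - y))) : Efull q Tini Tf) := by
    rw [← piFT_sub, ← kronMul_sub, sub_sub_sub_cancel_right]
    rfl
  rw [gradStep, gradStep, ← h, smul_sub]
  abel

theorem norm_gradStep_sub_sq_le {m M : ℝ} (hm : ∀ v : EfSp q Tf, m * ‖v‖ ^ 2 ≤ ⟪kronMul Φ v, v⟫)
    (hM : ∀ v : EfSp q Tf, ‖kronMul Φ v‖ ^ 2 ≤ M * ⟪kronMul Φ v, v⟫)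
    (hα : 0 ≤ 2 * α * (2 - 2 * α * M)) {x y : Efull q Tini Tf} (hxy : piIni (x - y) = 0) :
    ‖gradStep Φ wref α x - gradStep Φ wref α y‖ ^ 2 ≤
      (1 - 2 * α * (2 - 2 * α * M) * m) * ‖x - y‖ ^ 2 := by
  have hini : piIni ((x - y) - (2 * α) • piFT (kronMul Φ (piF (x - y)))) = 0 := by
    change piIni (x - y) - (2 * α) • piIni (piFT (kronMul Φ (piF (x - y))) : Efull q Tini Tf) = 0
    rw [hxy, piIni_piFT, smul_zero, sub_zero]
  have hf : piF ((x - y) - (2 * α) • piFT (kronMul Φ (piF (x - y))) : Efull q Tini Tf) =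
      piF (x - y) - (2 * α) • kronMul Φ (piF (x - y)) := rfl
  rw [gradStep_sub_gradStep, norm_eq_norm_piF_of_piIni_eq_zero hini, hf,
    norm_eq_norm_piF_of_piIni_eq_zero hxy]
  exact norm_sub_smul_sq_le (kronMul Φ) (hm _) (hM _) hα

variable {V : Submodule ℝ (Efull q Tini Tf)} {wini : EiniSp q Tini}
  {PA : Efull q Tini Tf → Efull q Tini Tf}

theorem wnormSq_add_le_of_proj_gradStep_eq (hPA : IsMetricProjection (Aset V wini) PA)
    (hΦ : (Matrix.toEuclideanLin Φ).IsSymmetric) (hα : 0 < α) {m : ℝ}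
    (hm : ∀ v : EfSp q Tf, m * ‖v‖ ^ 2 ≤ ⟪kronMul Φ v, v⟫) {w : Efull q Tini Tf}
    (hfix : PA (gradStep Φ wref α w) = w) {y : Efull q Tini Tf} (hy : y ∈ Aset V wini) :
    wnormSq Φ (piF w - wref) + m * ‖y - w‖ ^ 2 ≤ wnormSq Φ (piF y - wref) := by
  have hw : w ∈ Aset V wini := hfix ▸ (hPA _).1
  have hopt : 0 ≤ ⟪kronMul Φ (piF w - wref), piF (y - w)⟫ := by
    have h := hPA.inner_sub_le_zero convex_Aset (gradStep Φ wref α w) hy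
    rw [hfix, gradStep, sub_sub_cancel_left, inner_neg_left, real_inner_smul_left,
      inner_piFT_left] at h
    nlinarith
  have hsplit : piF y - wref = (piF w - wref) + piF (y - w) := by
    change piF y - wref = (piF w - wref) + (piF y - piF w)
    abel
  rw [hsplit, wnormSq_add hΦ, wnormSq_eq_inner (piF (y - w)),
    norm_eq_norm_piF_of_piIni_eq_zero (piIni_sub_eq_zero_of_mem_Aset hy hw)]
  linarith [hm (piF (y - w))]

end ProjectedGradient

theorem statement2_general
    (q Tini Tf : ℕ)
    (Φ : Matrix (Fin q) (Fin q) ℝ) (hΦ : Φ.PosDef)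
    (V : Submodule ℝ (Efull q Tini Tf))
    (wini : EiniSp q Tini) (wref : EfSp q Tf)
    -- P_A is the Euclidean (metric) projection onto the affine set A
    (PA : Efull q Tini Tf → Efull q Tini Tf)
    (hPA : ∀ x, PA x ∈ Aset V wini ∧ ∀ y ∈ Aset V wini, dist x (PA x) ≤ dist x y)
    -- λ_max(Φ), the largest eigenvalue of Φ
    (lmax : ℝ) (hlmax : IsGreatest (Set.range hΦ.1.eigenvalues) lmax)
    -- step size 0 < α < 1/λ_max(Φ)
    (α : ℝ) (hα0 : 0 < α) (hα1 : α < 1 / lmax)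
    -- the projected-gradient iteration, started from an arbitrary w_1
    (w : ℕ → Efull q Tini Tf)
    (hw : ∀ k, 1 ≤ k →
      w (k + 1) = PA (w k - (2 * α) • piFT (kronMul Φ (piF (w k) - wref)))) :
    -- {w_k} converges to the unique minimizer of h over A
    ∃ wstar : Efull q Tini Tf,
      (wstar ∈ Aset V wini ∧
        ∀ y ∈ Aset V wini, wnormSq Φ (piF wstar - wref) ≤ wnormSq Φ (piF y - wref)) ∧
      (∀ w' ∈ Aset V wini,
        (∀ y ∈ Aset V wini, wnormSq Φ (piF w' - wref) ≤ wnormSq Φ (piF y - wref)) →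
          w' = wstar) ∧
      Tendsto w atTop (𝓝 wstar) := by
  have hP : IsMetricProjection (Aset V wini) PA := hPA
  obtain ⟨i₀, hi₀⟩ := hlmax.1
  have hαM : α * lmax < 1 := (lt_div_iff₀ (hi₀ ▸ hΦ.eigenvalues_pos i₀)).1 hα1
  obtain ⟨m, hm0, hlow⟩ := exists_pos_mul_norm_sq_le_inner_kronMul (Tf := Tf) hΦ
  have hup := norm_kronMul_sq_le_of_eigenvalues_le (Tf := Tf) hΦ.posSemidef
    fun i => hlmax.2 ⟨i, rfl⟩
  have hcontr : ∀ x ∈ Aset V wini, ∀ y ∈ Aset V wini,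
      dist (PA (gradStep Φ wref α x)) (PA (gradStep Φ wref α y)) ^ 2 ≤
        (1 - 2 * α * (2 - 2 * α * lmax) * m) * dist x y ^ 2 := fun x hx y hy => by
    simp only [dist_eq_norm]
    exact (pow_le_pow_left₀ (norm_nonneg _) (hP.norm_sub_le convex_Aset _ _) 2).trans
      (norm_gradStep_sub_sq_le hlow hup (by nlinarith) (piIni_sub_eq_zero_of_mem_Aset hx hy))
  obtain ⟨wstar, hwstar, hfix, htendsto⟩ := exists_isFixedPt_tendsto_of_dist_sq_le
    isClosed_Aset.isComplete (f := PA ∘ gradStep Φ wref α) (fun x => (hP _).1)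
    (by nlinarith [mul_pos (mul_pos hα0 hm0) (sub_pos.2 hαM)]) hcontr hw
  have hgrowth := fun y (hy : y ∈ Aset V wini) =>
    wnormSq_add_le_of_proj_gradStep_eq hP (Matrix.isSymmetric_toEuclideanLin_iff.2 hΦ.1) hα0
      hlow hfix hy
  refine ⟨wstar, ⟨hwstar, fun y hy => ?_⟩, fun w' hw' hmin => ?_, htendsto⟩
  · nlinarith [hgrowth y hy]
  · rw [← sub_eq_zero, ← norm_eq_zero, ← sq_eq_zero_iff]
    exact le_antisymm (by nlinarith [hgrowth w' hw', hmin wstar hwstar]) (sq_nonneg _)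

theorem statement2
    (q Tini Tf : ℕ) (hq : 0 < q) (hTini : 0 < Tini) (hTf : 0 < Tf)
    (Φ : Matrix (Fin q) (Fin q) ℝ) (hΦ : Φ.PosDef)
    (V : Submodule ℝ (Efull q Tini Tf))
    (wini : EiniSp q Tini) (wref : EfSp q Tf)
    (hA : (Aset V wini).Nonempty)
    -- P_A is the Euclidean (metric) projection onto the affine set A
    (PA : Efull q Tini Tf → Efull q Tini Tf)
    (hPA : ∀ x, PA x ∈ Aset V wini ∧ ∀ y ∈ Aset V wini, dist x (PA x) ≤ dist x y)
    -- λ_max(Φ), the largest eigenvalue of Φ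
    (lmax : ℝ) (hlmax : IsGreatest (Set.range hΦ.1.eigenvalues) lmax)
    -- step size 0 < α < 1/λ_max(Φ)
    (α : ℝ) (hα0 : 0 < α) (hα1 : α < 1 / lmax)
    -- the projected-gradient iteration, started from an arbitrary w_1
    (w : ℕ → Efull q Tini Tf)
    (hw : ∀ k, 1 ≤ k →
      w (k + 1) = PA (w k - (2 * α) • piFT (kronMul Φ (piF (w k) - wref)))) :
    -- {w_k} converges to the unique minimizer of h over A
    ∃ wstar : Efull q Tini Tf,
      (wstar ∈ Aset V wini ∧
        ∀ y ∈ Aset V wini, wnormSq Φ (piF wstar - wref) ≤ wnormSq Φ (piF y - wref)) ∧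
      (∀ w' ∈ Aset V wini,
        (∀ y ∈ Aset V wini, wnormSq Φ (piF w' - wref) ≤ wnormSq Φ (piF y - wref)) →
          w' = wstar) ∧
      Tendsto w atTop (𝓝 wstar) :=
  statement2_general q Tini Tf Φ hΦ V wini wref PA hPA lmax hlmax α hα0 hα1 w hw

end LQT2
end

section
/- (Convergence of the Davis–Yin splitting algorithm.) Let f, g : ℝ^d → ℝ ∪ {+∞} be proper, convex, lower semicontinuous functions, let h : ℝ^d → ℝ be convex and differentiable with γ-Lipschitz gradient for some γ > 0, and let α ∈ (0, 2/γ). Assume there exist x* ∈ ℝ^d, u ∈ ∂f(x*), and v ∈ ∂g(x*) with u + v + ∇h(x*) = 0. Then for any initial point w_1 ∈ ℝ^d, the sequence defined by w_{k+1} = w_k − prox_{αg}(w_k) + prox_{αf}( 2 prox_{αg}(w_k) − w_k − α ∇h(prox_{αg}(w_k)) ) converges to some w̄ ∈ ℝ^d, and the point x̄ = prox_{αg}(w̄) satisfies 0 ∈ ∂f(x̄) + ∂g(x̄) + ∇h(x̄); in particular x̄ is a global minimizer of f + g + h. -/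
/-!
The Davis–Yin map `T w = w - prox_{αg} w + prox_{αf}(2 prox_{αg} w - w - α ∇h(prox_{αg} w))`
satisfies `‖T w - T w'‖² + (1 - αγ/2) ‖(w - T w) - (w' - T w')‖² ≤ ‖w - w'‖²`: this combines the
firm nonexpansiveness of the two proximal maps (monotonicity of the subdifferentials) with the
Baillon–Haddad cocoercivity `γ⁻¹ ‖∇h x - ∇h y‖² ≤ ⟪∇h x - ∇h y, x - y⟫`. Since `αγ < 2`, the
iterates are Fejér monotone with respect to the fixed points of `T` and `w_k - T w_k → 0`; the
point `x* + α v*` is a fixed point, so the bounded sequence has a cluster point, which is a fixed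
point by continuity, and Fejér monotonicity upgrades this to convergence of the whole sequence.
At a fixed point `w̄` the identity `T w̄ = w̄` reads off subgradients of `f` and `g` at
`prox_{αg} w̄` summing with `∇h` to zero.
-/

open scoped RealInnerProductSpace
open Filter Topology Function

section Prox

variable {E : Type*} [NormedAddCommGroup E] [InnerProductSpace ℝ E]

def HasSubgradientAt (φ : E → EReal) (u x : E) : Prop :=
  ∀ z, φ x + ((⟪u, z - x⟫ : ℝ) : EReal) ≤ φ z

structure IsProperConvex (φ : E → EReal) : Prop where
  ne_bot : ∀ x, φ x ≠ ⊥
  exists_ne_top : ∃ x, φ x ≠ ⊤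
  convex : ∀ x y : E, ∀ t : ℝ, 0 ≤ t → t ≤ 1 →
    φ (t • x + (1 - t) • y) ≤ (t : EReal) * φ x + ((1 - t : ℝ) : EReal) * φ y

def IsProxOperator (φ : E → EReal) (α : ℝ) (p : E → E) : Prop :=
  ∀ x z, φ (p x) + ((1 / (2 * α) * ‖p x - x‖ ^ 2 : ℝ) : EReal) ≤
    φ z + ((1 / (2 * α) * ‖z - x‖ ^ 2 : ℝ) : EReal)

variable {φ ψ : E → EReal} {u v x y : E}

theorem HasSubgradientAt.add (hφ : HasSubgradientAt φ u x) (hψ : HasSubgradientAt ψ v x) :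
    HasSubgradientAt (φ + ψ) (u + v) x := fun z =>
  calc (φ + ψ) x + ((⟪u + v, z - x⟫ : ℝ) : EReal)
      = (φ x + ((⟪u, z - x⟫ : ℝ) : EReal)) + (ψ x + ((⟪v, z - x⟫ : ℝ) : EReal)) := by
        rw [Pi.add_apply, inner_add_left, EReal.coe_add, add_add_add_comm]
    _ ≤ (φ + ψ) z := add_le_add (hφ z) (hψ z)

theorem HasSubgradientAt.apply_le (hφ : HasSubgradientAt φ 0 x) (z : E) : φ x ≤ φ z := by
  simpa using hφ z

theorem HasSubgradientAt.inner_sub_nonneg (hu : HasSubgradientAt φ u x)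
    (hv : HasSubgradientAt φ v y) (htop : φ x ≠ ⊤) (hbot : φ x ≠ ⊥) : 0 ≤ ⟪u - v, x - y⟫ := by
  have hux := hu y
  have hvy := hv x
  lift φ x to ℝ using ⟨htop, hbot⟩ with r
  have hytop : φ y ≠ ⊤ := fun hy => by simp [hy] at hvy
  have hybot : φ y ≠ ⊥ := fun hy => by simp [hy] at hux
  lift φ y to ℝ using ⟨hytop, hybot⟩ with s
  norm_cast at hux hvy
  have hinner : ⟪u - v, x - y⟫ = -⟪u, y - x⟫ - ⟪v, x - y⟫ := by
    rw [inner_sub_left, ← neg_sub x y, inner_neg_right, neg_neg]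
  linarith

variable {α : ℝ} {p : E → E}

theorem IsProxOperator.ne_top (hp : IsProxOperator φ α p) (hφ : IsProperConvex φ) (x : E) :
    φ (p x) ≠ ⊤ := by
  obtain ⟨z, hz⟩ := hφ.exists_ne_top
  have hpz := hp x z
  lift φ z to ℝ using ⟨hz, hφ.ne_bot z⟩ with r
  intro htop
  rw [htop, EReal.top_add_coe, ← EReal.coe_add] at hpz
  exact EReal.coe_ne_top _ (top_le_iff.mp hpz)

theorem IsProxOperator.hasSubgradientAt (hp : IsProxOperator φ α p) (hφ : IsProperConvex φ)
    (x : E) : HasSubgradientAt φ (α⁻¹ • (x - p x)) (p x) := by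
  intro z
  rcases eq_or_ne (φ z) ⊤ with hz | hz
  · exact hz ▸ le_top
  have hpx := hp.ne_top hφ x
  have hconv := hφ.convex z (p x)
  have hprox := fun t : ℝ => hp x (t • z + (1 - t) • p x)
  lift φ z to ℝ using ⟨hz, hφ.ne_bot z⟩ with r
  lift φ (p x) to ℝ using ⟨hpx, hφ.ne_bot (p x)⟩ with s
  set B := ⟪p x - x, z - p x⟫
  set C := ‖z - p x‖ ^ 2
  -- compare `p x` with `p x + t • (z - p x)` in the prox inequality, divide by `t`, let `t → 0⁺`
  have key : ∀ t ∈ Set.Ioc (0 : ℝ) 1, s - r ≤ α⁻¹ * B + t * (C / (2 * α)) := by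
    rintro t ⟨ht0, ht1⟩
    have h := (hprox t).trans (add_le_add_left (hconv t ht0.le ht1) _)
    norm_cast at h
    have hsplit : t • z + (1 - t) • p x - x = (p x - x) + t • (z - p x) := by
      rw [smul_sub, sub_smul, one_smul]; abel
    rw [hsplit, norm_add_sq_real, real_inner_smul_right, norm_smul, mul_pow, Real.norm_eq_abs,
      sq_abs] at h
    refine le_of_mul_le_mul_left ?_ ht0
    linear_combination h
  have hlim : Tendsto (fun t : ℝ => α⁻¹ * B + t * (C / (2 * α))) (𝓝[>] 0) (𝓝 (α⁻¹ * B)) := by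
    refine tendsto_nhdsWithin_of_tendsto_nhds ?_
    have hcont : Continuous fun t : ℝ => α⁻¹ * B + t * (C / (2 * α)) := by fun_prop
    simpa using hcont.tendsto 0
  have hsr := ge_of_tendsto hlim (eventually_of_mem (Ioc_mem_nhdsGT zero_lt_one) key)
  have hinner : ⟪α⁻¹ • (x - p x), z - p x⟫ = -(α⁻¹ * B) := by
    rw [real_inner_smul_left, ← neg_sub, inner_neg_left, mul_neg]
  rw [hinner]
  norm_cast
  linarith

theorem IsProxOperator.norm_sub_sq_le_inner (hp : IsProxOperator φ α p) (hφ : IsProperConvex φ)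
    (hα : 0 < α) (x y : E) : ‖p x - p y‖ ^ 2 ≤ ⟪x - y, p x - p y⟫ := by
  have hmono := (hp.hasSubgradientAt hφ x).inner_sub_nonneg (hp.hasSubgradientAt hφ y)
    (hp.ne_top hφ x) (hφ.ne_bot _)
  have hsplit : α⁻¹ • (x - p x) - α⁻¹ • (y - p y) = α⁻¹ • ((x - y) - (p x - p y)) := by
    rw [← smul_sub]; congr 1; abel
  rw [hsplit, real_inner_smul_left, inner_sub_left, real_inner_self_eq_norm_sq] at hmono
  linarith [nonneg_of_mul_nonneg_right hmono (inv_pos.mpr hα)]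

theorem IsProxOperator.apply_add_smul_eq (hp : IsProxOperator φ α p) (hφ : IsProperConvex φ)
    (hα : 0 < α) (hv : HasSubgradientAt φ v x) : p (x + α • v) = x := by
  set P := p (x + α • v)
  have hmono := (hp.hasSubgradientAt hφ (x + α • v)).inner_sub_nonneg hv
    (hp.ne_top hφ _) (hφ.ne_bot _)
  have hsplit : α⁻¹ • (x + α • v - P) - v = -(α⁻¹ • (P - x)) := by
    rw [smul_sub, smul_add, inv_smul_smul₀ hα.ne', smul_sub]; abel
  rw [hsplit, inner_neg_left, real_inner_smul_left, real_inner_self_eq_norm_sq] at hmono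
  have hnorm : ‖P - x‖ ^ 2 ≤ 0 := by
    nlinarith [inv_pos.mpr hα]
  rw [← sub_eq_zero, ← norm_eq_zero]
  exact pow_eq_zero_iff two_ne_zero |>.mp (le_antisymm hnorm (sq_nonneg _))

end Prox

section Smooth

variable {E : Type*} [NormedAddCommGroup E] [InnerProductSpace ℝ E] [CompleteSpace E]
  {h : E → ℝ} {h' : E → E} {g x v : E} {γ : ℝ}

theorem HasGradientAt.hasDerivAt_comp_add_smul {t : ℝ} (hg : HasGradientAt h g (x + t • v)) :
    HasDerivAt (fun s : ℝ => h (x + s • v)) ⟪g, v⟫ t := by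
  have hline : HasDerivAt (fun s : ℝ => x + s • v) v t := by
    simpa using ((hasDerivAt_id t).smul_const v).const_add x
  have := hg.hasFDerivAt.comp_hasDerivAt t hline
  simp only [InnerProductSpace.toDual_apply_apply] at this
  exact this

theorem ConvexOn.add_inner_le_of_hasGradientAt (hconv : ConvexOn ℝ Set.univ h)
    (hg : HasGradientAt h g x) (y : E) : h x + ⟪g, y - x⟫ ≤ h y := by
  have hline : ConvexOn ℝ Set.univ fun t : ℝ => h (x + t • (y - x)) := by
    have heq : h ∘ AffineMap.lineMap x y = fun t : ℝ => h (x + t • (y - x)) := by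
      ext t
      simp [AffineMap.lineMap_apply_module', add_comm]
    simpa [heq] using hconv.comp_affineMap (AffineMap.lineMap x y)
  have hderiv : HasDerivAt (fun t : ℝ => h (x + t • (y - x))) ⟪g, y - x⟫ 0 :=
    HasGradientAt.hasDerivAt_comp_add_smul (by simpa using hg)
  have hslope := hline.le_slope_of_hasDerivAt (Set.mem_univ 0) (Set.mem_univ 1) zero_lt_one hderiv
  simp only [slope_def_field, one_smul, add_sub_cancel, zero_smul, add_zero, sub_zero, div_one]
    at hslope
  linarith

theorem le_add_inner_add_sq_of_lipschitz_gradient (hh : ∀ x, HasGradientAt h (h' x) x)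
    (hlip : ∀ x y, ‖h' x - h' y‖ ≤ γ * ‖x - y‖) (x y : E) :
    h y ≤ h x + ⟪h' x, y - x⟫ + γ / 2 * ‖y - x‖ ^ 2 := by
  set v := y - x
  set ψ : ℝ → ℝ := fun t => h (x + t • v) - t * ⟪h' x, v⟫ - γ / 2 * t ^ 2 * ‖v‖ ^ 2
  set ψ' : ℝ → ℝ := fun t => ⟪h' (x + t • v), v⟫ - ⟪h' x, v⟫ - γ * t * ‖v‖ ^ 2
  have hψ : ∀ t, HasDerivAt ψ (ψ' t) t := fun t => by
    have := (((hh (x + t • v)).hasDerivAt_comp_add_smul (x := x) (v := v)).sub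
      ((hasDerivAt_id t).mul_const ⟪h' x, v⟫)).sub
        (((hasDerivAt_pow 2 t).const_mul (γ / 2)).mul_const (‖v‖ ^ 2))
    exact this.congr_deriv (by simp only [ψ']; ring)
  have hψ'_nonpos : ∀ t ∈ interior (Set.Ici (0 : ℝ)), ψ' t ≤ 0 := by
    intro t ht
    rw [interior_Ici] at ht
    have hgrowth : ‖h' (x + t • v) - h' x‖ ≤ γ * (t * ‖v‖) := by
      simpa [norm_smul, abs_of_pos (Set.mem_Ioi.mp ht)] using hlip (x + t • v) x
    have hcs := real_inner_le_norm (h' (x + t • v) - h' x) v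
    rw [inner_sub_left] at hcs
    nlinarith [mul_le_mul_of_nonneg_right hgrowth (norm_nonneg v)]
  have hanti : AntitoneOn ψ (Set.Ici 0) :=
    antitoneOn_of_hasDerivWithinAt_nonpos (convex_Ici 0)
      (fun t _ => (hψ t).continuousAt.continuousWithinAt)
      (fun t _ => (hψ t).hasDerivWithinAt) hψ'_nonpos
  have hψ01 := hanti (Set.mem_Ici.mpr le_rfl) (Set.mem_Ici.mpr zero_le_one) zero_le_one
  simp only [ψ, v, one_smul, add_sub_cancel, one_mul, one_pow, mul_one, zero_smul, add_zero,
    zero_mul, sub_zero, ne_eq, OfNat.ofNat_ne_zero, not_false_eq_true, zero_pow, mul_zero] at hψ01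
  linarith

theorem ConvexOn.add_inner_add_sq_le_of_lipschitz_gradient (hconv : ConvexOn ℝ Set.univ h)
    (hh : ∀ x, HasGradientAt h (h' x) x) (hγ : 0 < γ)
    (hlip : ∀ x y, ‖h' x - h' y‖ ≤ γ * ‖x - y‖) (a b : E) :
    h a + ⟪h' a, b - a⟫ + (2 * γ)⁻¹ * ‖h' b - h' a‖ ^ 2 ≤ h b := by
  set e := h' b - h' a
  -- compare `h` at the gradient step `z` from `b` against the tangent plane at `a`
  set z := b - γ⁻¹ • e
  have htangent := hconv.add_inner_le_of_hasGradientAt (hh a) z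
  have hdescent := le_add_inner_add_sq_of_lipschitz_gradient hh hlip b z
  have hza : z - a = (b - a) - γ⁻¹ • e := by simp only [z]; abel
  have hzb : z - b = -(γ⁻¹ • e) := by simp only [z]; abel
  rw [hza, inner_sub_right, real_inner_smul_right] at htangent
  rw [hzb, inner_neg_right, real_inner_smul_right, norm_neg, norm_smul, mul_pow,
    Real.norm_eq_abs, sq_abs] at hdescent
  have he : ⟪h' b, e⟫ - ⟪h' a, e⟫ = ‖e‖ ^ 2 := by
    rw [← inner_sub_left, real_inner_self_eq_norm_sq]
  have hcoef : γ / 2 * (γ⁻¹ ^ 2 * ‖e‖ ^ 2) = (2 * γ)⁻¹ * ‖e‖ ^ 2 := by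
    field_simp
  linear_combination htangent + hdescent - γ⁻¹ * he + hcoef

theorem ConvexOn.inv_mul_sq_le_inner_of_lipschitz_gradient (hconv : ConvexOn ℝ Set.univ h)
    (hh : ∀ x, HasGradientAt h (h' x) x) (hγ : 0 < γ)
    (hlip : ∀ x y, ‖h' x - h' y‖ ≤ γ * ‖x - y‖) (x y : E) :
    γ⁻¹ * ‖h' x - h' y‖ ^ 2 ≤ ⟪h' x - h' y, x - y⟫ := by
  have hxy := hconv.add_inner_add_sq_le_of_lipschitz_gradient hh hγ hlip x y
  have hyx := hconv.add_inner_add_sq_le_of_lipschitz_gradient hh hγ hlip y x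
  rw [← norm_neg, neg_sub] at hxy
  have hinner : ⟪h' x - h' y, x - y⟫ = -⟪h' x, y - x⟫ - ⟪h' y, x - y⟫ := by
    rw [inner_sub_left, ← neg_sub x y, inner_neg_right, neg_neg]
  rw [hinner]
  linear_combination hxy + hyx

theorem ConvexOn.hasSubgradientAt_coe (hconv : ConvexOn ℝ Set.univ h) (hg : HasGradientAt h g x) :
    HasSubgradientAt (fun z => (h z : EReal)) g x := fun y => by
  dsimp only
  exact_mod_cast hconv.add_inner_le_of_hasGradientAt hg y

end Smooth

section Averaged

variable {E : Type*} [NormedAddCommGroup E] {T : E → E} {κ : ℝ}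
  {w : ℕ → E} {z : E}

theorem lipschitzWith_one_of_sq_add_le (hκ : 0 ≤ κ)
    (hT : ∀ x y, ‖T x - T y‖ ^ 2 + κ * ‖(x - T x) - (y - T y)‖ ^ 2 ≤ ‖x - y‖ ^ 2) :
    LipschitzWith 1 T :=
  LipschitzWith.of_dist_le_mul fun x y => by
    rw [NNReal.coe_one, one_mul, dist_eq_norm, dist_eq_norm,
      ← sq_le_sq₀ (norm_nonneg _) (norm_nonneg _)]
    nlinarith [hT x y, sq_nonneg ‖(x - T x) - (y - T y)‖]

theorem tendsto_sub_apply_of_sq_add_le (hκ : 0 < κ)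
    (hT : ∀ x y, ‖T x - T y‖ ^ 2 + κ * ‖(x - T x) - (y - T y)‖ ^ 2 ≤ ‖x - y‖ ^ 2)
    (hz : IsFixedPt T z) (hw : ∀ k, w (k + 1) = T (w k)) :
    Tendsto (fun k => w k - T (w k)) atTop (𝓝 0) := by
  set a : ℕ → ℝ := fun k => ‖w k - z‖ ^ 2
  have hstep : ∀ k, a (k + 1) + κ * ‖w k - T (w k)‖ ^ 2 ≤ a k := fun k => by
    simpa [a, hw k, hz.eq] using hT (w k) z
  have ha : Tendsto a atTop (𝓝 (⨅ k, a k)) :=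
    tendsto_atTop_ciInf (antitone_nat_of_succ_le fun k => by nlinarith [hstep k])
      ⟨0, by rintro _ ⟨k, rfl⟩; positivity⟩
  have hdiff : Tendsto (fun k => (a k - a (k + 1)) / κ) atTop (𝓝 0) := by
    simpa using (ha.sub (ha.comp (tendsto_add_atTop_nat 1))).div_const κ
  have hsq : Tendsto (fun k => ‖w k - T (w k)‖ ^ 2) atTop (𝓝 0) :=
    squeeze_zero (fun _ => sq_nonneg _)
      (fun k => by rw [le_div_iff₀ hκ]; linarith [hstep k]) hdiff
  rw [tendsto_zero_iff_norm_tendsto_zero]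
  simpa using hsq.sqrt

theorem exists_isFixedPt_tendsto_of_sq_add_le [ProperSpace E] (hκ : 0 < κ)
    (hT : ∀ x y, ‖T x - T y‖ ^ 2 + κ * ‖(x - T x) - (y - T y)‖ ^ 2 ≤ ‖x - y‖ ^ 2)
    (hfix : ∃ z, IsFixedPt T z) (hw : ∀ k, w (k + 1) = T (w k)) :
    ∃ z, IsFixedPt T z ∧ Tendsto w atTop (𝓝 z) := by
  obtain ⟨z, hz⟩ := hfix
  have hlip := lipschitzWith_one_of_sq_add_le hκ.le hT
  have hfejer : ∀ y, IsFixedPt T y → Antitone fun k => dist (w k) y := fun y hy =>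
    antitone_nat_of_succ_le fun k => by
      simpa [hw k, hy.eq] using hlip.dist_le_mul (w k) y
  obtain ⟨wbar, -, φ, hφ, hsub⟩ := tendsto_subseq_of_bounded
    (Metric.isBounded_closedBall (x := z) (r := dist (w 0) z))
    fun k => hfejer z hz (Nat.zero_le k)
  -- along the subsequence `T (w k) = w k - (w k - T (w k))` tends both to `T wbar` and to `wbar`
  have hfixbar : IsFixedPt T wbar := by
    refine tendsto_nhds_unique ((hlip.continuous.tendsto wbar).comp hsub) ?_
    have hres := (tendsto_sub_apply_of_sq_add_le hκ hT hz hw).comp hφ.tendsto_atTop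
    simpa [comp_def] using hsub.sub hres
  refine ⟨wbar, hfixbar, ?_⟩
  rw [tendsto_iff_dist_tendsto_zero,
    tendsto_iff_tendsto_subseq_of_antitone (hfejer wbar hfixbar) hφ.tendsto_atTop]
  exact tendsto_iff_dist_tendsto_zero.mp hsub

end Averaged

section DavisYin

variable {E : Type*} [NormedAddCommGroup E] [InnerProductSpace ℝ E]

theorem norm_sub_add_sq_add_le {a b c e : E} {α γ : ℝ} (hα : 0 < α) (hγ : 0 < γ)
    (hb : ‖b‖ ^ 2 ≤ ⟪a, b⟫) (hc : ‖c‖ ^ 2 ≤ ⟪(2 : ℝ) • b - a - α • e, c⟫)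
    (he : γ⁻¹ * ‖e‖ ^ 2 ≤ ⟪e, b⟫) :
    ‖a - b + c‖ ^ 2 + (1 - α * γ / 2) * ‖b - c‖ ^ 2 ≤ ‖a‖ ^ 2 := by
  -- by Young's inequality, `he` bounds `⟪e, c⟫` from below
  have hyoung : ⟪e, b - c⟫ ≤ γ⁻¹ * ‖e‖ ^ 2 + γ / 4 * ‖b - c‖ ^ 2 := by
    have hsq : 0 ≤ γ⁻¹ * (‖e‖ - γ / 2 * ‖b - c‖) ^ 2 := by positivity
    have hγ' : γ⁻¹ * γ = 1 := inv_mul_cancel₀ hγ.ne'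
    nlinarith [real_inner_le_norm e (b - c)]
  have hec : 0 ≤ ⟪e, c⟫ + γ / 4 * ‖b - c‖ ^ 2 := by
    rw [inner_sub_right] at hyoung
    linarith
  rw [inner_sub_left, inner_sub_left, real_inner_smul_left, real_inner_smul_left] at hc
  have hbc : ‖b - c‖ ^ 2 = ‖b‖ ^ 2 - 2 * ⟪b, c⟫ + ‖c‖ ^ 2 := norm_sub_sq_real b c
  rw [show a - b + c = a - (b - c) by abel, norm_sub_sq_real, inner_sub_right, hbc]
  rw [hbc] at hec
  nlinarith [mul_nonneg hα.le hec]

def davisYin (proxf proxg h' : E → E) (α : ℝ) (w : E) : E :=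
  w - proxg w + proxf ((2 : ℝ) • proxg w - w - α • h' (proxg w))

variable {proxf proxg h' : E → E} {α γ : ℝ}

theorem norm_davisYin_sub_sq_add_le (hα : 0 < α) (hγ : 0 < γ)
    (hf : ∀ x y, ‖proxf x - proxf y‖ ^ 2 ≤ ⟪x - y, proxf x - proxf y⟫)
    (hg : ∀ x y, ‖proxg x - proxg y‖ ^ 2 ≤ ⟪x - y, proxg x - proxg y⟫)
    (hh : ∀ x y, γ⁻¹ * ‖h' x - h' y‖ ^ 2 ≤ ⟪h' x - h' y, x - y⟫) (w w' : E) :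
    ‖davisYin proxf proxg h' α w - davisYin proxf proxg h' α w'‖ ^ 2 +
        (1 - α * γ / 2) * ‖(w - davisYin proxf proxg h' α w) -
          (w' - davisYin proxf proxg h' α w')‖ ^ 2 ≤ ‖w - w'‖ ^ 2 := by
  set y := (2 : ℝ) • proxg w - w - α • h' (proxg w)
  set y' := (2 : ℝ) • proxg w' - w' - α • h' (proxg w')
  have hy : y - y' =
      (2 : ℝ) • (proxg w - proxg w') - (w - w') - α • (h' (proxg w) - h' (proxg w')) := by
    simp only [y, y', smul_sub]; abel
  have hT : davisYin proxf proxg h' α w - davisYin proxf proxg h' α w' =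
      (w - w') - (proxg w - proxg w') + (proxf y - proxf y') := by
    simp only [davisYin, y, y']; abel
  have hR : (w - davisYin proxf proxg h' α w) - (w' - davisYin proxf proxg h' α w') =
      (proxg w - proxg w') - (proxf y - proxf y') := by
    simp only [davisYin, y, y']; abel
  rw [hT, hR]
  exact norm_sub_add_sq_add_le hα hγ (hg w w') (hy ▸ hf y y') (hh _ _)

theorem davisYin_isFixedPt {x u v : E} (hg : proxg (x + α • v) = x) (hf : proxf (x + α • u) = x)
    (hzero : u + v + h' x = 0) : IsFixedPt (davisYin proxf proxg h' α) (x + α • v) := by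
  have hy :
      (2 : ℝ) • proxg (x + α • v) - (x + α • v) - α • h' (proxg (x + α • v)) = x + α • u := by
    rw [hg, eq_neg_of_add_eq_zero_right hzero, smul_neg, smul_add, two_smul]; abel
  rw [IsFixedPt, davisYin, hy, hf, hg]
  abel

theorem exists_hasSubgradientAt_of_isFixedPt_davisYin {f g : E → EReal} {w : E} (hα : α ≠ 0)
    (hf : ∀ x, HasSubgradientAt f (α⁻¹ • (x - proxf x)) (proxf x))
    (hg : ∀ x, HasSubgradientAt g (α⁻¹ • (x - proxg x)) (proxg x))
    (hw : IsFixedPt (davisYin proxf proxg h' α) w) :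
    ∃ u v, HasSubgradientAt f u (proxg w) ∧ HasSubgradientAt g v (proxg w) ∧
      u + v + h' (proxg w) = 0 := by
  set y := (2 : ℝ) • proxg w - w - α • h' (proxg w)
  have hfy : proxf y = proxg w := by
    have hfix := hw.eq
    rw [davisYin, ← sub_eq_zero] at hfix
    rw [← sub_eq_zero, ← hfix]
    abel
  refine ⟨α⁻¹ • (y - proxg w), α⁻¹ • (w - proxg w), hfy ▸ hf y, hg w, ?_⟩
  have hsum : y - proxg w + (w - proxg w) = -(α • h' (proxg w)) := by
    simp only [y, two_smul]; abel
  rw [← smul_add, hsum, smul_neg, inv_smul_smul₀ hα, neg_add_cancel]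

end DavisYin

noncomputable section DY

theorem statement5_general (d : ℕ)
    (f g : EuclideanSpace ℝ (Fin d) → EReal)
    -- f and g are proper (never −∞, somewhere finite)
    (hf_ne_bot : ∀ x, f x ≠ ⊥) (hf_proper : ∃ x, f x ≠ ⊤)
    (hg_ne_bot : ∀ x, g x ≠ ⊥) (hg_proper : ∃ x, g x ≠ ⊤)
    -- f and g are convex
    (hf_convex : ∀ x y : EuclideanSpace ℝ (Fin d), ∀ t : ℝ, 0 ≤ t → t ≤ 1 →
      f (t • x + (1 - t) • y) ≤ (t : EReal) * f x + ((1 - t : ℝ) : EReal) * f y)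
    (hg_convex : ∀ x y : EuclideanSpace ℝ (Fin d), ∀ t : ℝ, 0 ≤ t → t ≤ 1 →
      g (t • x + (1 - t) • y) ≤ (t : EReal) * g x + ((1 - t : ℝ) : EReal) * g y)
    -- h is convex and differentiable with γ-Lipschitz gradient h'
    (h : EuclideanSpace ℝ (Fin d) → ℝ)
    (hh_convex : ConvexOn ℝ Set.univ h)
    (h' : EuclideanSpace ℝ (Fin d) → EuclideanSpace ℝ (Fin d))
    (hh_grad : ∀ x, HasGradientAt h (h' x) x)
    (γ : ℝ) (hγ : 0 < γ)
    (hh_lip : ∀ x y, ‖h' x - h' y‖ ≤ γ * ‖x - y‖)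
    -- step size α ∈ (0, 2/γ)
    (α : ℝ) (hα0 : 0 < α) (hα2 : α < 2 / γ)
    -- proxf = prox_{αf} and proxg = prox_{αg}: minimizers of
    -- z ↦ φ(z) + (1/(2α))‖z − x‖²
    (proxf proxg : EuclideanSpace ℝ (Fin d) → EuclideanSpace ℝ (Fin d))
    (hproxf : ∀ x z : EuclideanSpace ℝ (Fin d),
      f (proxf x) + ((1 / (2 * α) * ‖proxf x - x‖ ^ 2 : ℝ) : EReal) ≤
        f z + ((1 / (2 * α) * ‖z - x‖ ^ 2 : ℝ) : EReal))
    (hproxg : ∀ x z : EuclideanSpace ℝ (Fin d),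
      g (proxg x) + ((1 / (2 * α) * ‖proxg x - x‖ ^ 2 : ℝ) : EReal) ≤
        g z + ((1 / (2 * α) * ‖z - x‖ ^ 2 : ℝ) : EReal))
    -- there exist x*, u ∈ ∂f(x*), v ∈ ∂g(x*) with u + v + ∇h(x*) = 0
    (xstar ustar vstar : EuclideanSpace ℝ (Fin d))
    (hustar : ∀ z, f xstar + ((⟪ustar, z - xstar⟫ : ℝ) : EReal) ≤ f z)
    (hvstar : ∀ z, g xstar + ((⟪vstar, z - xstar⟫ : ℝ) : EReal) ≤ g z)
    (hzero : ustar + vstar + h' xstar = 0)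
    -- the Davis–Yin iteration, started from an arbitrary initial point w_1
    (w : ℕ → EuclideanSpace ℝ (Fin d))
    (hw : ∀ k, w (k + 1) =
      w k - proxg (w k) +
        proxf ((2 : ℝ) • proxg (w k) - w k - α • h' (proxg (w k)))) :
    -- {w_k} converges to some w̄, and x̄ = prox_{αg}(w̄) satisfies
    -- 0 ∈ ∂f(x̄) + ∂g(x̄) + ∇h(x̄); in particular x̄ globally minimizes f + g + h
    ∃ wbar : EuclideanSpace ℝ (Fin d),
      Tendsto w atTop (𝓝 wbar) ∧
      (∃ u v : EuclideanSpace ℝ (Fin d),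
        (∀ z, f (proxg wbar) + ((⟪u, z - proxg wbar⟫ : ℝ) : EReal) ≤ f z) ∧
        (∀ z, g (proxg wbar) + ((⟪v, z - proxg wbar⟫ : ℝ) : EReal) ≤ g z) ∧
        u + v + h' (proxg wbar) = 0) ∧
      ∀ z, f (proxg wbar) + g (proxg wbar) + ((h (proxg wbar) : ℝ) : EReal) ≤
        f z + g z + ((h z : ℝ) : EReal) := by
  have hf : IsProperConvex f := ⟨hf_ne_bot, hf_proper, hf_convex⟩
  have hg : IsProperConvex g := ⟨hg_ne_bot, hg_proper, hg_convex⟩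
  have hpf : IsProxOperator f α proxf := hproxf
  have hpg : IsProxOperator g α proxg := hproxg
  have hκ : 0 < 1 - α * γ / 2 := by
    rw [lt_div_iff₀ hγ] at hα2
    linarith
  have hT := norm_davisYin_sub_sq_add_le hα0 hγ (hpf.norm_sub_sq_le_inner hf hα0)
    (hpg.norm_sub_sq_le_inner hg hα0)
    (hh_convex.inv_mul_sq_le_inner_of_lipschitz_gradient hh_grad hγ hh_lip)
  have hstar : IsFixedPt (davisYin proxf proxg h' α) (xstar + α • vstar) :=
    davisYin_isFixedPt (hpg.apply_add_smul_eq hg hα0 hvstar) (hpf.apply_add_smul_eq hf hα0 hustar)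
      hzero
  obtain ⟨wbar, hfix, hlim⟩ := exists_isFixedPt_tendsto_of_sq_add_le hκ hT ⟨_, hstar⟩ hw
  obtain ⟨u, v, hu, hv, huv⟩ := exists_hasSubgradientAt_of_isFixedPt_davisYin hα0.ne'
    (hpf.hasSubgradientAt hf) (hpg.hasSubgradientAt hg) hfix
  refine ⟨wbar, hlim, ⟨u, v, hu, hv, huv⟩, fun z => ?_⟩
  have hsum := (hu.add hv).add (hh_convex.hasSubgradientAt_coe (hh_grad (proxg wbar)))
  rw [huv] at hsum
  exact hsum.apply_le z

theorem statement5 (d : ℕ)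
    (f g : EuclideanSpace ℝ (Fin d) → EReal)
    -- f and g are proper (never −∞, somewhere finite)
    (hf_ne_bot : ∀ x, f x ≠ ⊥) (hf_proper : ∃ x, f x ≠ ⊤)
    (hg_ne_bot : ∀ x, g x ≠ ⊥) (hg_proper : ∃ x, g x ≠ ⊤)
    -- f and g are convex
    (hf_convex : ∀ x y : EuclideanSpace ℝ (Fin d), ∀ t : ℝ, 0 ≤ t → t ≤ 1 →
      f (t • x + (1 - t) • y) ≤ (t : EReal) * f x + ((1 - t : ℝ) : EReal) * f y)
    (hg_convex : ∀ x y : EuclideanSpace ℝ (Fin d), ∀ t : ℝ, 0 ≤ t → t ≤ 1 →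
      g (t • x + (1 - t) • y) ≤ (t : EReal) * g x + ((1 - t : ℝ) : EReal) * g y)
    -- f and g are lower semicontinuous
    (hf_lsc : LowerSemicontinuous f) (hg_lsc : LowerSemicontinuous g)
    -- h is convex and differentiable with γ-Lipschitz gradient h'
    (h : EuclideanSpace ℝ (Fin d) → ℝ)
    (hh_convex : ConvexOn ℝ Set.univ h)
    (h' : EuclideanSpace ℝ (Fin d) → EuclideanSpace ℝ (Fin d))
    (hh_grad : ∀ x, HasGradientAt h (h' x) x)
    (γ : ℝ) (hγ : 0 < γ)
    (hh_lip : ∀ x y, ‖h' x - h' y‖ ≤ γ * ‖x - y‖)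
    -- step size α ∈ (0, 2/γ)
    (α : ℝ) (hα0 : 0 < α) (hα2 : α < 2 / γ)
    -- proxf = prox_{αf} and proxg = prox_{αg}: minimizers of
    -- z ↦ φ(z) + (1/(2α))‖z − x‖²
    (proxf proxg : EuclideanSpace ℝ (Fin d) → EuclideanSpace ℝ (Fin d))
    (hproxf : ∀ x z : EuclideanSpace ℝ (Fin d),
      f (proxf x) + ((1 / (2 * α) * ‖proxf x - x‖ ^ 2 : ℝ) : EReal) ≤
        f z + ((1 / (2 * α) * ‖z - x‖ ^ 2 : ℝ) : EReal))
    (hproxg : ∀ x z : EuclideanSpace ℝ (Fin d),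
      g (proxg x) + ((1 / (2 * α) * ‖proxg x - x‖ ^ 2 : ℝ) : EReal) ≤
        g z + ((1 / (2 * α) * ‖z - x‖ ^ 2 : ℝ) : EReal))
    -- there exist x*, u ∈ ∂f(x*), v ∈ ∂g(x*) with u + v + ∇h(x*) = 0
    (xstar ustar vstar : EuclideanSpace ℝ (Fin d))
    (hustar : ∀ z, f xstar + ((⟪ustar, z - xstar⟫ : ℝ) : EReal) ≤ f z)
    (hvstar : ∀ z, g xstar + ((⟪vstar, z - xstar⟫ : ℝ) : EReal) ≤ g z)
    (hzero : ustar + vstar + h' xstar = 0)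
    -- the Davis–Yin iteration, started from an arbitrary initial point w_1
    (w : ℕ → EuclideanSpace ℝ (Fin d))
    (hw : ∀ k, w (k + 1) =
      w k - proxg (w k) +
        proxf ((2 : ℝ) • proxg (w k) - w k - α • h' (proxg (w k)))) :
    -- {w_k} converges to some w̄, and x̄ = prox_{αg}(w̄) satisfies
    -- 0 ∈ ∂f(x̄) + ∂g(x̄) + ∇h(x̄); in particular x̄ globally minimizes f + g + h
    ∃ wbar : EuclideanSpace ℝ (Fin d),
      Tendsto w atTop (𝓝 wbar) ∧
      (∃ u v : EuclideanSpace ℝ (Fin d),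
        (∀ z, f (proxg wbar) + ((⟪u, z - proxg wbar⟫ : ℝ) : EReal) ≤ f z) ∧
        (∀ z, g (proxg wbar) + ((⟪v, z - proxg wbar⟫ : ℝ) : EReal) ≤ g z) ∧
        u + v + h' (proxg wbar) = 0) ∧
      ∀ z, f (proxg wbar) + g (proxg wbar) + ((h (proxg wbar) : ℝ) : EReal) ≤
        f z + g z + ((h z : ℝ) : EReal) :=
  statement5_general d f g hf_ne_bot hf_proper hg_ne_bot hg_proper hf_convex hg_convex h hh_convex
    h' hh_grad γ hγ hh_lip α hα0 hα2 proxf proxg hproxf hproxg xstar ustar vstar hustar hvstar hzero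
    w hw

end DY
end

section
/- (von Neumann alternating projections.) Let H be a real Hilbert space and let U and W be closed linear subspaces of H, with orthogonal projections P_U, P_W, and P_{U∩W} onto U, W, and U ∩ W respectively. Then for every x ∈ H, the sequence defined by x_0 = x and x_{k+1} = P_W(P_U(x_k)) converges in norm to P_{U∩W}(x). -/
/-!
Interleave the two projections: z₀ = x, z₁ = P_U z₀, z₂ = P_W z₁, …, so that the iterates of
P_W ∘ P_U are the even terms. Each step is an orthogonal projection, so ‖zₙ‖ decreases, and since
z_k lies in the subspace onto which z_{k+2d+1} is projected, induction on d gives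
⟪z_k, z_{k+2d}⟫ = ‖z_{k+d}‖² for k ≥ 1. Hence ‖z_k - z_{k+2d}‖² ≤ ‖z_k‖² - ‖z_{k+2d}‖², so the
odd terms form a Cauchy sequence; consecutive differences tend to 0, so the whole sequence
converges, and its limit lies in U ∩ W. Each step changes x by a vector orthogonal to U ∩ W, so
x minus the limit is orthogonal to U ∩ W: the limit is P_{U∩W} x.
-/

open scoped RealInnerProductSpace
open Filter Topology

theorem Filter.Tendsto.of_tendsto_two_mul_of_tendsto_two_mul_add_one {X : Type*}
    [TopologicalSpace X] {f : ℕ → X} {a : X}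
    (h_even : Tendsto (fun n => f (2 * n)) atTop (𝓝 a))
    (h_odd : Tendsto (fun n => f (2 * n + 1)) atTop (𝓝 a)) :
    Tendsto f atTop (𝓝 a) := by
  rw [tendsto_atTop_nhds] at *
  intro s has hs
  obtain ⟨N₀, hN₀⟩ := h_even s has hs
  obtain ⟨N₁, hN₁⟩ := h_odd s has hs
  refine ⟨2 * (N₀ + N₁), fun n hn => ?_⟩
  obtain ⟨k, rfl | rfl⟩ := Nat.even_or_odd' n
  · exact hN₀ k (by omega)
  · exact hN₁ k (by omega)

theorem cauchySeq_of_norm_sub_sq_le {E : Type*} [SeminormedAddCommGroup E] {v : ℕ → E}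
    (h : ∀ j l, j ≤ l → ‖v j - v l‖ ^ 2 ≤ ‖v j‖ ^ 2 - ‖v l‖ ^ 2) : CauchySeq v := by
  have h_anti : Antitone fun j => ‖v j‖ ^ 2 := fun j l hjl => by
    linarith [h j l hjl, sq_nonneg ‖v j - v l‖]
  have h_bdd : BddBelow (Set.range fun j => ‖v j‖ ^ 2) := ⟨0, by rintro _ ⟨j, rfl⟩; positivity⟩
  have h_cauchy := (tendsto_atTop_ciInf h_anti h_bdd).cauchySeq
  have h_dist : ∀ j l, dist (v j) (v l) ^ 2 ≤ dist (‖v j‖ ^ 2) (‖v l‖ ^ 2) := by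
    intro j l
    rw [dist_eq_norm, Real.dist_eq]
    rcases le_total j l with hjl | hlj
    · exact (h j l hjl).trans (le_abs_self _)
    · rw [norm_sub_rev, abs_sub_comm]
      exact (h l j hlj).trans (le_abs_self _)
  rw [Metric.cauchySeq_iff] at h_cauchy ⊢
  intro ε hε
  obtain ⟨N, hN⟩ := h_cauchy (ε ^ 2) (by positivity)
  exact ⟨N, fun j hj l hl =>
    lt_of_pow_lt_pow_left₀ 2 hε.le ((h_dist j l).trans_lt (hN j hj l hl))⟩

theorem Function.Periodic.nat_add_two_mul {α : Type*} {f : ℕ → α} (h : Function.Periodic f 2)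
    (n d : ℕ) : f (n + 2 * d) = f n := by
  simpa [mul_comm] using h.nat_mul d n

def alternate {α : Type*} (P Q : α → α) (x : α) : ℕ → α
  | 0 => x
  | n + 1 => if Even n then P (alternate P Q x n) else Q (alternate P Q x n)

theorem alternate_two_mul {α : Type*} (P Q : α → α) (x : α) (k : ℕ) :
    alternate P Q x (2 * k) = (fun y => Q (P y))^[k] x := by
  induction k with
  | zero => rfl
  | succ k ih =>
    have h_odd : ¬Even (2 * k + 1) := Nat.not_even_iff_odd.mpr (odd_two_mul_add_one k)
    rw [Function.iterate_succ_apply', ← ih, mul_add, mul_one]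
    simp only [alternate, h_odd, even_two_mul, if_true, if_false]

section SuccessiveProjections

variable {H : Type*} [NormedAddCommGroup H] [InnerProductSpace ℝ H]

structure IsSuccessiveProjection (S : ℕ → Submodule ℝ H) (z : ℕ → H) : Prop where
  mem : ∀ n, z (n + 1) ∈ S n
  inner_sub_eq_zero : ∀ n, ∀ u ∈ S n, ⟪z n - z (n + 1), u⟫ = 0

namespace IsSuccessiveProjection

variable {S : ℕ → Submodule ℝ H} {z : ℕ → H} (hz : IsSuccessiveProjection S z)
include hz

theorem norm_sq_eq_norm_sub_sq_add_norm_sq (n : ℕ) :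
    ‖z n‖ ^ 2 = ‖z n - z (n + 1)‖ ^ 2 + ‖z (n + 1)‖ ^ 2 := by
  have := norm_add_sq_eq_norm_sq_add_norm_sq_real (hz.inner_sub_eq_zero n _ (hz.mem n))
  rw [sub_add_cancel] at this
  simpa only [sq] using this

theorem antitone_norm : Antitone fun n => ‖z n‖ := by
  refine antitone_nat_of_succ_le fun n => ?_
  have := hz.norm_sq_eq_norm_sub_sq_add_norm_sq n
  exact (sq_le_sq₀ (norm_nonneg _) (norm_nonneg _)).mp
    (by linarith [sq_nonneg ‖z n - z (n + 1)‖])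

theorem tendsto_sub_succ : Tendsto (fun n => z n - z (n + 1)) atTop (𝓝 0) := by
  have h_anti : Antitone fun n => ‖z n‖ ^ 2 := fun m n hmn =>
    pow_le_pow_left₀ (norm_nonneg _) (hz.antitone_norm hmn) 2
  have h_bdd : BddBelow (Set.range fun n => ‖z n‖ ^ 2) := ⟨0, by rintro _ ⟨n, rfl⟩; positivity⟩
  have h_lim := tendsto_atTop_ciInf h_anti h_bdd
  have h_sq : Tendsto (fun n => ‖z n - z (n + 1)‖ ^ 2) atTop (𝓝 0) := by
    have h_eq : ∀ n, ‖z n - z (n + 1)‖ ^ 2 = ‖z n‖ ^ 2 - ‖z (n + 1)‖ ^ 2 := fun n => by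
      linarith [hz.norm_sq_eq_norm_sub_sq_add_norm_sq n]
    simp_rw [h_eq]
    simpa using h_lim.sub (h_lim.comp (tendsto_add_atTop_nat 1))
  rw [tendsto_zero_iff_norm_tendsto_zero]
  simpa using h_sq.sqrt

theorem inner_sub_zero_eq_zero {u : H} (hu : ∀ n, u ∈ S n) (n : ℕ) : ⟪z 0 - z n, u⟫ = 0 := by
  induction n with
  | zero => simp
  | succ n ih =>
    rw [← sub_add_sub_cancel (z 0) (z n), inner_add_left, ih,
      hz.inner_sub_eq_zero n u (hu n), add_zero]

theorem inner_eq_norm_sq (hS : Function.Periodic S 2) (k d : ℕ) :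
    ⟪z (k + 1), z (k + 1 + 2 * d)⟫ = ‖z (k + 1 + d)‖ ^ 2 := by
  induction d generalizing k with
  | zero => simp
  | succ d ih =>
    have h_far : ⟪z (k + 1), z (k + 1 + 2 * d + 1) - z (k + 1 + 2 * d + 2)⟫ = 0 := by
      rw [real_inner_comm]
      refine hz.inner_sub_eq_zero _ _ ?_
      rw [show k + 1 + 2 * d + 1 = k + 2 * (d + 1) by ring, hS.nat_add_two_mul]
      exact hz.mem k
    have h_near : ⟪z (k + 1) - z (k + 2), z (k + 1 + 2 * d + 1)⟫ = 0 :=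
      hz.inner_sub_eq_zero _ _ (hS.nat_add_two_mul (k + 1) d ▸ hz.mem _)
    rw [inner_sub_right] at h_far
    rw [inner_sub_left] at h_near
    calc ⟪z (k + 1), z (k + 1 + 2 * (d + 1))⟫
        = ⟪z (k + 1), z (k + 1 + 2 * d + 1)⟫ := by
          rw [show k + 1 + 2 * (d + 1) = k + 1 + 2 * d + 2 by ring, sub_eq_zero.mp h_far]
      _ = ⟪z (k + 2), z (k + 2 + 2 * d)⟫ := by
          rw [sub_eq_zero.mp h_near, show k + 2 + 2 * d = k + 1 + 2 * d + 1 by ring]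
      _ = ‖z (k + 1 + (d + 1))‖ ^ 2 := by rw [ih (k + 1)]; ring_nf

theorem norm_sub_sq_le (hS : Function.Periodic S 2) (k d : ℕ) :
    ‖z (k + 1) - z (k + 1 + 2 * d)‖ ^ 2 ≤ ‖z (k + 1)‖ ^ 2 - ‖z (k + 1 + 2 * d)‖ ^ 2 := by
  have h_mono : ‖z (k + 1 + 2 * d)‖ ^ 2 ≤ ‖z (k + 1 + d)‖ ^ 2 :=
    pow_le_pow_left₀ (norm_nonneg _) (hz.antitone_norm (by omega)) 2
  rw [norm_sub_sq_real, hz.inner_eq_norm_sq hS]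
  linarith

theorem cauchySeq_odd (hS : Function.Periodic S 2) : CauchySeq fun j => z (2 * j + 1) :=
  cauchySeq_of_norm_sub_sq_le fun j l hjl => by
    obtain ⟨d, rfl⟩ := Nat.exists_eq_add_of_le hjl
    simpa only [show 2 * (j + d) + 1 = 2 * j + 1 + 2 * d by ring] using
      hz.norm_sub_sq_le hS (2 * j) d

theorem exists_tendsto [CompleteSpace H] (hS : Function.Periodic S 2) :
    ∃ w, Tendsto z atTop (𝓝 w) := by
  obtain ⟨w, h_odd⟩ := cauchySeq_tendsto_of_complete (hz.cauchySeq_odd hS)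
  have h_step : Tendsto (fun j => z (2 * j + 1) - z (2 * j + 1 + 1)) atTop (𝓝 0) :=
    hz.tendsto_sub_succ.comp (StrictMono.tendsto_atTop fun a b h => by omega)
  refine ⟨w, .of_tendsto_two_mul_of_tendsto_two_mul_add_one ?_ h_odd⟩
  rw [← tendsto_add_atTop_iff_nat 1]
  exact (sub_zero w ▸ h_odd.sub h_step).congr fun j => sub_sub_cancel _ _

theorem mem_of_tendsto (hS : Function.Periodic S 2) (hS_closed : ∀ n, IsClosed (S n : Set H))
    {w : H} (hw : Tendsto z atTop (𝓝 w)) (n : ℕ) : w ∈ S n := by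
  have h_sub : Tendsto (fun j => n + 2 * j + 1) atTop atTop :=
    StrictMono.tendsto_atTop fun a b h => by omega
  refine (hS_closed n).mem_of_tendsto (hw.comp h_sub) (.of_forall fun j => ?_)
  simpa only [Function.comp_apply, SetLike.mem_coe, hS.nat_add_two_mul] using hz.mem (n + 2 * j)

theorem inner_sub_eq_zero_of_tendsto {w u : H} (hw : Tendsto z atTop (𝓝 w)) (hu : ∀ n, u ∈ S n) :
    ⟪z 0 - w, u⟫ = 0 :=
  tendsto_nhds_unique ((tendsto_const_nhds.sub hw).inner tendsto_const_nhds)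
    (by simp only [hz.inner_sub_zero_eq_zero hu, tendsto_const_nhds])

end IsSuccessiveProjection

theorem isSuccessiveProjection_alternate {U W : Submodule ℝ H} {PU PW : H → H}
    (hPU : ∀ x, PU x ∈ U ∧ ∀ u ∈ U, ⟪x - PU x, u⟫ = 0)
    (hPW : ∀ x, PW x ∈ W ∧ ∀ u ∈ W, ⟪x - PW x, u⟫ = 0) (x : H) :
    IsSuccessiveProjection (fun n => if Even n then U else W) (alternate PU PW x) where
  mem n := by
    simp only [alternate]
    split_ifs
    exacts [(hPU _).1, (hPW _).1]
  inner_sub_eq_zero n := by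
    simp only [alternate]
    split_ifs
    exacts [(hPU _).2, (hPW _).2]

theorem exists_tendsto_alternate [CompleteSpace H] {U W : Submodule ℝ H}
    (hU : IsClosed (U : Set H)) (hW : IsClosed (W : Set H)) {PU PW : H → H}
    (hPU : ∀ x, PU x ∈ U ∧ ∀ u ∈ U, ⟪x - PU x, u⟫ = 0)
    (hPW : ∀ x, PW x ∈ W ∧ ∀ u ∈ W, ⟪x - PW x, u⟫ = 0) (x : H) :
    ∃ w ∈ U ⊓ W, Tendsto (alternate PU PW x) atTop (𝓝 w) ∧ ∀ u ∈ U ⊓ W, ⟪x - w, u⟫ = 0 := by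
  set S : ℕ → Submodule ℝ H := fun n => if Even n then U else W
  have hS : Function.Periodic S 2 := fun n => by simp [S, Nat.even_add]
  have hS_closed : ∀ n, IsClosed (S n : Set H) := fun n => by
    by_cases h : Even n <;> simp [S, h, hU, hW]
  have hS_mem : ∀ u, (∀ n, u ∈ S n) ↔ u ∈ U ⊓ W := fun u =>
    ⟨fun h => ⟨by simpa [S] using h 0, by simpa [S] using h 1⟩,
      fun h n => by
        simp only [S]
        split_ifs
        exacts [h.1, h.2]⟩
  have hz := isSuccessiveProjection_alternate hPU hPW x
  obtain ⟨w, hw⟩ := hz.exists_tendsto hS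
  exact ⟨w, (hS_mem w).mp (hz.mem_of_tendsto hS hS_closed hw), hw,
    fun u hu => hz.inner_sub_eq_zero_of_tendsto hw ((hS_mem u).mpr hu)⟩

end SuccessiveProjections

theorem statement7 {H : Type*} [NormedAddCommGroup H] [InnerProductSpace ℝ H]
    [CompleteSpace H]
    (U W : Submodule ℝ H)
    (hU : IsClosed (U : Set H)) (hW : IsClosed (W : Set H))
    -- P_U, P_W, P_{U∩W} are the orthogonal projections onto U, W and U ∩ W
    (PU PW PUW : H → H)
    (hPU : ∀ x, PU x ∈ U ∧ ∀ u ∈ U, ⟪x - PU x, u⟫ = 0)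
    (hPW : ∀ x, PW x ∈ W ∧ ∀ u ∈ W, ⟪x - PW x, u⟫ = 0)
    (hPUW : ∀ x, PUW x ∈ U ⊓ W ∧ ∀ u ∈ U ⊓ W, ⟪x - PUW x, u⟫ = 0)
    (x : H) :
    -- x_0 = x, x_{k+1} = P_W (P_U x_k)  ⟹  x_k → P_{U∩W} x
    Tendsto (fun k => (fun y => PW (PU y))^[k] x) atTop (𝓝 (PUW x)) := by
  obtain ⟨w, hw_mem, hw, hw_orth⟩ := exists_tendsto_alternate hU hW hPU hPW x
  have : CompleteSpace (U ⊓ W : Submodule ℝ H) := (hU.inter hW).completeSpace_coe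
  have hw_eq : w = PUW x := by
    rw [← Submodule.eq_starProjection_of_mem_of_inner_eq_zero hw_mem hw_orth,
      Submodule.eq_starProjection_of_mem_of_inner_eq_zero (hPUW x).1 (hPUW x).2]
  have h_two_mul : Tendsto (fun k => 2 * k) atTop atTop :=
    StrictMono.tendsto_atTop fun a b h => by omega
  simpa only [hw_eq, Function.comp_def, alternate_two_mul] using hw.comp h_two_mul
end

section
/- (Boyle–Dykstra theorem.) Let H be a real Hilbert space and C_1, …, C_s closed convex subsets with nonempty intersection C = C_1 ∩ ⋯ ∩ C_s. Given x ∈ H, define Dykstra's algorithm by: x_0^{(s)} = x and q_0^{(i)} = 0 for i = 1,…,s; and for each cycle n ≥ 1, set x_n^{(0)} = x_{n−1}^{(s)} and, for i = 1,…,s, x_n^{(i)} = P_{C_i}( x_n^{(i−1)} + q_{n−1}^{(i)} ) and q_n^{(i)} = x_n^{(i−1)} + q_{n−1}^{(i)} − x_n^{(i)}. Then for each i ∈ {1,…,s}, the sequence x_n^{(i)} converges in norm, as n → ∞, to P_C(x), the point of C nearest to x. -/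
/-!
Lay the cycles out in one sequence `u k` with corrections `q k`, so that step `k` projects
`u (k - 1) + q (k - s)` onto the set of its phase. For every `y` in the intersection,
`‖u n - y‖² + 2 ∑_{n-s<k≤n} ⟪q k, u k - y⟫ = ‖x - y‖² - c n`, where `c n` is a sum of
nonnegative gains and the inner products are nonnegative. Hence `c n` increases to some
`L ≤ ‖x - P_C x‖²`, and `∑ ‖u (k - 1) - u k‖² < ∞`. As the harmonic series diverges, along
suitable cycles `m` the squared steps are `o(1 / m)`, while `‖q k‖² ≤ k ‖x - P_C x‖²`; so the
cross terms in `‖x - u n‖² = c n + 2 ∑_{n-s<k≤n} ⟪q k, u k - u n⟫` vanish at the ends of these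
cycles. A weak cluster point `w` of those ends lies in every `C i` and has `‖x - w‖² ≤ L`, so
`L = ‖x - P_C x‖²` and `‖u n - P_C x‖² ≤ ‖x - P_C x‖² - c n → 0`.
-/

open Filter Topology Finset TopologicalSpace
open scoped RealInnerProductSpace

theorem sum_Ioc_add_sum_Ioc {α M : Type*} [LinearOrder α] [LocallyFiniteOrder α]
    [AddCommMonoid M] (f : α → M) {a b c : α} (hab : a ≤ b) (hbc : b ≤ c) :
    ∑ k ∈ Ioc a b, f k + ∑ k ∈ Ioc b c, f k = ∑ k ∈ Ioc a c, f k := by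
  rw [← sum_union (Ioc_disjoint_Ioc_of_le le_rfl), Ioc_union_Ioc_eq_Ioc hab hbc]

theorem Int.Ioc_self_add_one (a : ℤ) : Ioc a (a + 1) = {a + 1} := by
  ext k
  simp only [mem_Ioc, mem_singleton]
  omega

theorem Int.sum_Ioc_add_one_right {M : Type*} [AddCommMonoid M] (f : ℤ → M) {a b : ℤ}
    (h : a ≤ b) : ∑ k ∈ Ioc a (b + 1), f k = ∑ k ∈ Ioc a b, f k + f (b + 1) := by
  rw [← sum_Ioc_add_sum_Ioc f h (by omega), Int.Ioc_self_add_one, sum_singleton]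

theorem Int.sum_Ioc_add_one_left {M : Type*} [AddCommMonoid M] (f : ℤ → M) {a b : ℤ}
    (h : a < b) : ∑ k ∈ Ioc a b, f k = f (a + 1) + ∑ k ∈ Ioc (a + 1) b, f k := by
  rw [← sum_Ioc_add_sum_Ioc f (by omega : a ≤ a + 1) h, Int.Ioc_self_add_one, sum_singleton]

theorem Int.sum_Ioc_sub_one_add {M : Type*} [AddCommMonoid M] (f : ℤ → M) {a b : ℤ}
    (h : a < b) : ∑ k ∈ Ioc a (b - 1), f k + f b = ∑ k ∈ Ioc a b, f k := by
  simpa using (Int.sum_Ioc_add_one_right f (by omega : a ≤ b - 1)).symm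

theorem Int.sub_eq_sum_Ioc {G : Type*} [AddCommGroup G] (f : ℤ → G) {a b : ℤ} (h : a ≤ b) :
    f a - f b = ∑ k ∈ Ioc a b, (f (k - 1) - f k) := by
  induction b, h using Int.leInduction with
  | base => simp
  | succ b hab ih =>
    rw [Int.sum_Ioc_add_one_right _ hab, ← ih, add_sub_cancel_right]
    abel

theorem Int.sq_norm_sub_le_mul_sum_sq {E : Type*} [SeminormedAddCommGroup E] (s : ℕ) (u : ℤ → E)
    {j n : ℤ} (hj : j ∈ Ioc (n - s) n) :
    ‖u j - u n‖ ^ 2 ≤ s * ∑ k ∈ Ioc (n - s) n, ‖u (k - 1) - u k‖ ^ 2 := by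
  have hj := mem_Ioc.1 hj
  have hle : ‖u j - u n‖ ≤ ∑ k ∈ Ioc (n - s) n, ‖u (k - 1) - u k‖ := by
    rw [Int.sub_eq_sum_Ioc u hj.2]
    exact (norm_sum_le _ _).trans <| sum_le_sum_of_subset_of_nonneg
      (Ioc_subset_Ioc_left hj.1.le) fun _ _ _ => norm_nonneg _
  calc ‖u j - u n‖ ^ 2 ≤ (∑ k ∈ Ioc (n - s) n, ‖u (k - 1) - u k‖) ^ 2 :=
        pow_le_pow_left₀ (norm_nonneg _) hle 2
    _ ≤ (Ioc (n - s) n).card * ∑ k ∈ Ioc (n - s) n, ‖u (k - 1) - u k‖ ^ 2 :=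
        sq_sum_le_card_mul_sum_sq
    _ = s * ∑ k ∈ Ioc (n - s) n, ‖u (k - 1) - u k‖ ^ 2 := by
        rw [Int.card_Ioc, sub_sub_cancel, Int.toNat_natCast]

theorem tendsto_zero_of_tendsto_sq {α : Type*} {l : Filter α} {f : α → ℝ}
    (hf : Tendsto (fun a => f a ^ 2) l (𝓝 0)) : Tendsto f l (𝓝 0) := by
  refine (tendsto_zero_iff_abs_tendsto_zero f).2 ?_
  simpa [Function.comp_def, Real.sqrt_sq_eq_abs] using hf.sqrt

theorem exists_strictMono_tendsto_mul_zero {v : ℕ → ℝ} (hv0 : ∀ n, 0 ≤ v n) (hv : Summable v) :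
    ∃ φ : ℕ → ℕ, StrictMono φ ∧ Tendsto (fun j => (φ j : ℝ) * v (φ j)) atTop (𝓝 0) := by
  have hfreq (j : ℕ) : ∃ᶠ n : ℕ in atTop, (n : ℝ) * v n < 1 / (j + 1) := by
    by_contra hj
    refine Real.not_summable_natCast_inv
      (Summable.of_norm_bounded_eventually (hv.mul_left ((j : ℝ) + 1)) ?_)
    rw [Nat.cofinite_eq_atTop]
    filter_upwards [not_frequently.1 hj, eventually_gt_atTop 0] with n hn hpos
    rw [not_lt, div_le_iff₀ (by positivity)] at hn
    rw [norm_inv, Real.norm_natCast, inv_le_iff_one_le_mul₀ (by exact_mod_cast hpos)]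
    linarith
  obtain ⟨φ, hφ, hlt⟩ := extraction_forall_of_frequently hfreq
  exact ⟨φ, hφ, squeeze_zero (fun j => mul_nonneg (Nat.cast_nonneg _) (hv0 _))
    (fun j => (hlt j).le) tendsto_one_div_add_atTop_nhds_zero_nat⟩

section InnerProductSpace

variable {H : Type*} [NormedAddCommGroup H] [InnerProductSpace ℝ H]

theorem inner_sub_nonpos_of_forall_dist_le {K : Set H} (hK : Convex ℝ K) {a p : H} (hp : p ∈ K)
    (hmin : ∀ z ∈ K, dist a p ≤ dist a z) : ∀ z ∈ K, ⟪a - p, z - p⟫ ≤ 0 := by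
  have : Nonempty K := ⟨⟨p, hp⟩⟩
  refine (norm_eq_iInf_iff_real_inner_le_zero hK hp).1 (le_antisymm ?_ ?_)
  · exact le_ciInf fun z => by simpa only [dist_eq_norm] using hmin z z.2
  · exact ciInf_le (f := fun z : K => ‖a - z‖)
      ⟨0, Set.forall_mem_range.2 fun _ => norm_nonneg _⟩ ⟨p, hp⟩

theorem exists_strictMono_forall_tendsto_inner [CompleteSpace H] {g : ℕ → H} {R : ℝ}
    (hg : ∀ n, ‖g n‖ ≤ R) :
    ∃ (w : H) (φ : ℕ → ℕ), StrictMono φ ∧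
      ∀ v, Tendsto (fun l => ⟪g (φ l), v⟫) atTop (𝓝 ⟪w, v⟫) := by
  -- Banach–Alaoglu applies in the closed span of the sequence, which is separable.
  set V := (Submodule.span ℝ (Set.range g)).topologicalClosure
  have hgV (n : ℕ) : g n ∈ V :=
    Submodule.le_topologicalClosure _ (Submodule.subset_span (Set.mem_range_self n))
  have : SeparableSpace V := by
    refine IsSeparable.separableSpace ?_
    rw [Submodule.topologicalClosure_coe]
    exact (Set.countable_range g).isSeparable.span.closure
  let f (n : ℕ) : WeakDual ℝ V :=
    StrongDual.toWeakDual (InnerProductSpace.toDual ℝ V ⟨g n, hgV n⟩)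
  have hf (n : ℕ) : WeakDual.toStrongDual (f n) ∈ Metric.closedBall (0 : StrongDual ℝ V) R := by
    have h : ‖InnerProductSpace.toDual ℝ V ⟨g n, hgV n⟩‖ ≤ R := by simpa using hg n
    exact mem_closedBall_zero_iff.2 h
  obtain ⟨a, -, φ, hφ, hlim⟩ := WeakDual.isSeqCompact_closedBall ℝ V 0 R hf
  refine ⟨(InnerProductSpace.toDual ℝ V).symm (WeakDual.toStrongDual a), φ, hφ, fun v => ?_⟩
  have hV (y : V) :
      ⟪(y : H), v⟫ = InnerProductSpace.toDual ℝ V y (V.orthogonalProjectionOnto v) := by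
    rw [InnerProductSpace.toDual_apply_apply, Submodule.coe_inner, ← sub_eq_zero,
      ← inner_sub_right, real_inner_comm]
    exact V.starProjection_inner_eq_zero v y y.2
  have hlim' := ((WeakDual.eval_continuous (V.orthogonalProjectionOnto v)).tendsto a).comp hlim
  rw [hV, LinearIsometryEquiv.apply_symm_apply]
  exact hlim'.congr fun l => (hV ⟨g (φ l), hgV (φ l)⟩).symm

theorem mem_of_forall_tendsto_inner [CompleteSpace H] {K : Set H} (hK : IsClosed K)
    (hKc : Convex ℝ K) {y : ℕ → H} (hy : ∀ l, y l ∈ K) {w : H}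
    (hw : ∀ v, Tendsto (fun l => ⟪y l, v⟫) atTop (𝓝 ⟪w, v⟫)) : w ∈ K := by
  obtain ⟨p, hpK, hp⟩ := exists_norm_eq_iInf_of_complete_convex ⟨y 0, hy 0⟩ hK.isComplete hKc w
  have hvi := (norm_eq_iInf_iff_real_inner_le_zero hKc hpK).1 hp
  have hlim : Tendsto (fun l => ⟪y l - p, w - p⟫) atTop (𝓝 ⟪w - p, w - p⟫) := by
    simpa only [inner_sub_left] using (hw (w - p)).sub_const ⟪p, w - p⟫
  have hle : ⟪w - p, w - p⟫ ≤ 0 :=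
    le_of_tendsto hlim (Eventually.of_forall fun l => real_inner_comm (w - p) _ ▸ hvi _ (hy l))
  rw [real_inner_self_nonpos, sub_eq_zero] at hle
  exact hle ▸ hpK

theorem forall_tendsto_inner_of_tendsto_sq_norm_sub {y z : ℕ → H} {w : H}
    (hw : ∀ v, Tendsto (fun l => ⟪y l, v⟫) atTop (𝓝 ⟪w, v⟫))
    (hzy : Tendsto (fun l => ‖z l - y l‖ ^ 2) atTop (𝓝 0)) :
    ∀ v, Tendsto (fun l => ⟪z l, v⟫) atTop (𝓝 ⟪w, v⟫) := by
  intro v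
  have hnorm := tendsto_zero_of_tendsto_sq hzy
  have hinner : Tendsto (fun l => ⟪z l - y l, v⟫) atTop (𝓝 0) :=
    squeeze_zero_norm (fun l => abs_real_inner_le_norm _ _) (by simpa using hnorm.mul_const ‖v‖)
  simpa [inner_sub_left] using hinner.add (hw v)

theorem sq_norm_le_of_forall_tendsto_inner {y : ℕ → H} {w : H} {L : ℝ}
    (hw : ∀ v, Tendsto (fun l => ⟪y l, v⟫) atTop (𝓝 ⟪w, v⟫))
    (hL : Tendsto (fun l => ‖y l‖ ^ 2) atTop (𝓝 L)) : ‖w‖ ^ 2 ≤ L := by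
  have h := le_of_tendsto_of_tendsto ((hw w).const_mul 2) (hL.add_const (‖w‖ ^ 2))
    (Eventually.of_forall fun l => by nlinarith [norm_sub_sq_real (y l) w])
  rw [real_inner_self_eq_norm_sq] at h
  linarith

end InnerProductSpace

namespace Dykstra

/-- Step `k = s * (n - 1) + i` (with `1 ≤ i ≤ s`) of the flattened iteration is step
`phase s k = i` of cycle `cycle s k = n`. For `k ≤ 0` the cycle is `0`, so that the flattened
sequences start from `X 0 s = x` and `Q 0 i = 0`. -/
def phase (s : ℕ) (k : ℤ) : ℕ := ((k - 1) % s).toNat + 1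

def cycle (s : ℕ) (k : ℤ) : ℕ := ((k - 1) / s + 1).toNat

variable {s : ℕ}

theorem exists_eq_mul_add (hs : 0 < s) (k : ℤ) :
    ∃ (n : ℤ) (i : ℕ), 1 ≤ i ∧ i ≤ s ∧ k = s * n + i := by
  have hs' : (0 : ℤ) < s := by exact_mod_cast hs
  refine ⟨(k - 1) / s, ((k - 1) % s).toNat + 1, by omega, ?_, ?_⟩
  · have := Int.emod_lt_of_pos (k - 1) hs'
    omega
  · have := Int.emod_nonneg (k - 1) hs'.ne'
    have := Int.mul_ediv_add_emod (k - 1) s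
    push_cast
    omega

theorem phase_mul_add (n : ℤ) {i : ℕ} (hi : 1 ≤ i) (his : i ≤ s) :
    phase s (s * n + i) = i := by
  have h : ((i : ℤ) - 1) % s = i - 1 := Int.emod_eq_of_lt (by omega) (by omega)
  rw [phase, show s * n + (i : ℤ) - 1 = (i - 1) + s * n by ring, Int.add_mul_emod_self_left, h]
  omega

theorem cycle_mul_add (n : ℤ) {i : ℕ} (hi : 1 ≤ i) (his : i ≤ s) :
    cycle s (s * n + i) = (n + 1).toNat := by
  have h : ((i : ℤ) - 1) / s = 0 := Int.ediv_eq_zero_of_lt (by omega) (by omega)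
  rw [cycle, show s * n + (i : ℤ) - 1 = (i - 1) + s * n by ring,
    Int.add_mul_ediv_left _ _ (by omega), h, zero_add]

theorem one_le_phase (k : ℤ) : 1 ≤ phase s k := Nat.le_add_left 1 _

theorem phase_le (hs : 0 < s) (k : ℤ) : phase s k ≤ s := by
  obtain ⟨n, i, hi, his, rfl⟩ := exists_eq_mul_add hs k
  rw [phase_mul_add n hi his]
  exact his

theorem phase_sub_self (hs : 0 < s) (k : ℤ) : phase s (k - s) = phase s k := by
  obtain ⟨n, i, hi, his, rfl⟩ := exists_eq_mul_add hs k
  rw [show s * n + (i : ℤ) - s = s * (n - 1) + i by ring, phase_mul_add _ hi his,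
    phase_mul_add _ hi his]

theorem exists_nat_eq_mul_add (hs : 0 < s) {k : ℤ} (hk : 1 ≤ k) :
    ∃ (n i : ℕ), 1 ≤ i ∧ i ≤ s ∧ k = s * n + i := by
  obtain ⟨n, i, hi, his, rfl⟩ := exists_eq_mul_add hs k
  lift n to ℕ using (by nlinarith)
  exact ⟨n, i, hi, his, rfl⟩

theorem cycle_natCast_mul_add (n : ℕ) {i : ℕ} (hi : 1 ≤ i) (his : i ≤ s) :
    cycle s (s * n + i) = n + 1 := by
  rw [cycle_mul_add _ hi his]
  omega

variable {H : Type*} [NormedAddCommGroup H] [InnerProductSpace ℝ H]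

/-- Dykstra's algorithm with the cycles laid out in a single sequence: `u k` is the `k`-th
iterate and `q k` the correction produced at step `k`, which is reused `s` steps later.
The projection property of `u k` enters only through the variational inequality. -/
structure IsIteration (s : ℕ) (C : ℕ → Set H) (x : H) (u q : ℤ → H) : Prop where
  pos : 0 < s
  init : u 0 = x
  carry_of_nonpos : ∀ k ≤ 0, q k = 0
  add_carry : ∀ k, 1 ≤ k → u (k - 1) + q (k - s) = u k + q k
  mem : ∀ k, 1 ≤ k → u k ∈ C (phase s k)
  inner_le_zero : ∀ k, 1 ≤ k → ∀ z ∈ C (phase s k), ⟪q k, z - u k⟫ ≤ 0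

/-- The decrease of `‖u n - y‖ ^ 2 + 2 ∑ ⟪q k, u k - y⟫` (sum over the last `s` steps) at step
`k`; it does not depend on `y`. -/
def gain (s : ℕ) (u q : ℤ → H) (k : ℤ) : ℝ :=
  ‖u (k - 1) - u k‖ ^ 2 + 2 * ⟪q (k - s), u (k - s) - u k⟫

noncomputable def sumSqSteps (s : ℕ) (u : ℤ → H) (m : ℕ) : ℝ :=
  ∑ k ∈ Ioc (s * (m : ℤ)) (s * m + s), ‖u (k - 1) - u k‖ ^ 2

namespace IsIteration

variable {C : ℕ → Set H} {x : H} {u q : ℤ → H}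

theorem carry_eq (h : IsIteration s C x u q) {k : ℤ} (hk : 1 ≤ k) :
    q k = q (k - s) + (u (k - 1) - u k) :=
  calc q k = (u k + q k) - u k := by abel
    _ = q (k - s) + (u (k - 1) - u k) := by rw [← h.add_carry k hk]; abel

theorem inner_carry_nonneg (h : IsIteration s C x u q) {k : ℤ} (hk : 1 ≤ k) :
    0 ≤ ⟪q (k - s), u (k - s) - u k⟫ := by
  rcases le_or_gt (k - s) 0 with hks | hks
  · rw [h.carry_of_nonpos _ hks, inner_zero_left]
  · have := h.inner_le_zero (k - s) hks (u k) (by rw [phase_sub_self h.pos]; exact h.mem k hk)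
    rw [← neg_sub (u k), inner_neg_right]
    linarith

theorem gain_nonneg (h : IsIteration s C x u q) {k : ℤ} (hk : 1 ≤ k) : 0 ≤ gain s u q k := by
  have := h.inner_carry_nonneg hk
  unfold gain
  positivity

theorem inner_nonneg_of_mem (h : IsIteration s C x u q) {y : H}
    (hy : y ∈ ⋂ i ∈ Set.Icc 1 s, C i) (k : ℤ) : 0 ≤ ⟪q k, u k - y⟫ := by
  rcases le_or_gt k 0 with hk | hk
  · rw [h.carry_of_nonpos k hk, inner_zero_left]
  · have := h.inner_le_zero k hk y
      (Set.mem_iInter₂.1 hy _ ⟨one_le_phase k, phase_le h.pos k⟩)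
    rw [← neg_sub y, inner_neg_right]
    linarith

theorem energy_eq (h : IsIteration s C x u q) (y : H) {n : ℤ} (hn : 0 ≤ n) :
    ‖u n - y‖ ^ 2 + 2 * ∑ k ∈ Ioc (n - s) n, ⟪q k, u k - y⟫ =
      ‖x - y‖ ^ 2 - ∑ k ∈ Ioc 0 n, gain s u q k := by
  induction n, hn using Int.leInduction with
  | base =>
    rw [sum_eq_zero fun k hk => by rw [h.carry_of_nonpos k (mem_Ioc.1 hk).2, inner_zero_left],
      Ioc_self, sum_empty, h.init]
    ring
  | succ n hn ih =>
    have hs : (1 : ℤ) ≤ s := by exact_mod_cast h.pos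
    have hwin := Int.sum_Ioc_add_one_right (fun k => ⟪q k, u k - y⟫) (by omega : n - s ≤ n)
    rw [Int.sum_Ioc_add_one_left _ (by omega : n - s < n + 1),
      show n - s + 1 = n + 1 - s by ring] at hwin
    have hq := h.carry_eq (k := n + 1) (by omega)
    rw [add_sub_cancel_right] at hq
    rw [Int.sum_Ioc_add_one_right _ hn, sub_add_eq_sub_sub, ← ih, gain, add_sub_cancel_right,
      show u n - y = (u (n + 1) - y) + (u n - u (n + 1)) by abel, norm_add_sq_real]
    rw [hq, inner_add_left] at hwin
    have hsplit : ⟪q (n + 1 - s), u (n + 1 - s) - u (n + 1)⟫ =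
        ⟪q (n + 1 - s), u (n + 1 - s) - y⟫ - ⟪q (n + 1 - s), u (n + 1) - y⟫ := by
      rw [← inner_sub_right, sub_sub_sub_cancel_right]
    rw [real_inner_comm (u (n + 1) - y) (u n - u (n + 1))] at hwin
    rw [hsplit]
    linarith

theorem sq_norm_sub_le (h : IsIteration s C x u q) {y : H} (hy : y ∈ ⋂ i ∈ Set.Icc 1 s, C i)
    {n : ℤ} (hn : 0 ≤ n) : ‖u n - y‖ ^ 2 ≤ ‖x - y‖ ^ 2 - ∑ k ∈ Ioc 0 n, gain s u q k := by
  have := h.energy_eq y hn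
  have := sum_nonneg fun k (_ : k ∈ Ioc (n - s) n) => h.inner_nonneg_of_mem hy k
  linarith

theorem sum_gain_le (h : IsIteration s C x u q) {y : H} (hy : y ∈ ⋂ i ∈ Set.Icc 1 s, C i)
    (n : ℤ) : ∑ k ∈ Ioc 0 n, gain s u q k ≤ ‖x - y‖ ^ 2 := by
  rcases le_or_gt 0 n with hn | hn
  · linarith [h.sq_norm_sub_le hy hn, sq_nonneg ‖u n - y‖]
  · rw [Ioc_eq_empty (by omega), sum_empty]
    positivity

theorem monotone_sum_gain (h : IsIteration s C x u q) :
    Monotone fun n => ∑ k ∈ Ioc 0 n, gain s u q k := fun _ _ hmn =>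
  sum_le_sum_of_subset_of_nonneg (Ioc_subset_Ioc_right hmn) fun _ hk _ =>
    h.gain_nonneg (mem_Ioc.1 hk).1

theorem sum_sq_norm_sub_le (h : IsIteration s C x u q) {y : H}
    (hy : y ∈ ⋂ i ∈ Set.Icc 1 s, C i) (n : ℤ) :
    ∑ k ∈ Ioc 0 n, ‖u (k - 1) - u k‖ ^ 2 ≤ ‖x - y‖ ^ 2 := by
  refine (sum_le_sum fun k hk => ?_).trans (h.sum_gain_le hy n)
  have := h.inner_carry_nonneg (mem_Ioc.1 hk).1
  unfold gain
  linarith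

theorem norm_carry_le (h : IsIteration s C x u q) (k : ℤ) :
    ‖q k‖ ≤ ∑ l ∈ Ioc 0 k, ‖u (l - 1) - u l‖ := by
  suffices ∀ N : ℕ, ∀ k ≤ (N : ℤ), ‖q k‖ ≤ ∑ l ∈ Ioc 0 k, ‖u (l - 1) - u l‖ from
    this k.toNat k (Int.self_le_toNat k)
  intro N
  induction N with
  | zero =>
    intro k hk
    rw [h.carry_of_nonpos k hk, norm_zero]
    exact sum_nonneg fun _ _ => norm_nonneg _
  | succ N ih =>
    intro k hk
    rcases le_or_gt k N with hkN | hkN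
    · exact ih k hkN
    have hs : (1 : ℤ) ≤ s := by exact_mod_cast h.pos
    calc ‖q k‖ ≤ ‖q (k - s)‖ + ‖u (k - 1) - u k‖ := by
          rw [h.carry_eq (by omega : 1 ≤ k)]
          exact norm_add_le _ _
      _ ≤ ∑ l ∈ Ioc 0 (k - 1), ‖u (l - 1) - u l‖ + ‖u (k - 1) - u k‖ := by
          gcongr
          exact (ih _ (by omega)).trans <|
            sum_le_sum_of_subset_of_nonneg (Ioc_subset_Ioc_right (by omega)) fun _ _ _ =>
              norm_nonneg _
      _ = ∑ l ∈ Ioc 0 k, ‖u (l - 1) - u l‖ := by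
          rw [← Int.sum_Ioc_sub_one_add _ (by omega : (0 : ℤ) < k)]

theorem sq_norm_carry_le (h : IsIteration s C x u q) {y : H}
    (hy : y ∈ ⋂ i ∈ Set.Icc 1 s, C i) {k : ℤ} (hk : 0 ≤ k) :
    ‖q k‖ ^ 2 ≤ k * ‖x - y‖ ^ 2 := by
  have hcard : ((Ioc 0 k).card : ℝ) = k := by
    rw [Int.card_Ioc, sub_zero]
    exact_mod_cast Int.toNat_of_nonneg hk
  calc ‖q k‖ ^ 2 ≤ (∑ l ∈ Ioc 0 k, ‖u (l - 1) - u l‖) ^ 2 :=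
        pow_le_pow_left₀ (norm_nonneg _) (h.norm_carry_le k) 2
    _ ≤ (Ioc 0 k).card * ∑ l ∈ Ioc 0 k, ‖u (l - 1) - u l‖ ^ 2 := sq_sum_le_card_mul_sum_sq
    _ ≤ k * ‖x - y‖ ^ 2 := by
        rw [hcard]
        exact mul_le_mul_of_nonneg_left (h.sum_sq_norm_sub_le hy k) (by exact_mod_cast hk)

theorem sq_norm_sub_eq (h : IsIteration s C x u q) {n : ℤ} (hn : 0 ≤ n) :
    ‖x - u n‖ ^ 2 =
      ∑ k ∈ Ioc 0 n, gain s u q k + 2 * ∑ k ∈ Ioc (n - s) n, ⟪q k, u k - u n⟫ := by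
  have := h.energy_eq (u n) hn
  rw [sub_self, norm_zero] at this
  linarith

theorem sq_sum_inner_le (h : IsIteration s C x u q) {y : H} (hy : y ∈ ⋂ i ∈ Set.Icc 1 s, C i)
    {n : ℤ} (hn : (s : ℤ) ≤ n) :
    (∑ k ∈ Ioc (n - s) n, ⟪q k, u k - u n⟫) ^ 2 ≤
      s ^ 3 * n * ‖x - y‖ ^ 2 * ∑ k ∈ Ioc (n - s) n, ‖u (k - 1) - u k‖ ^ 2 := by
  set W := ∑ k ∈ Ioc (n - s) n, ‖u (k - 1) - u k‖ ^ 2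
  have hcard : ((Ioc (n - s) n).card : ℝ) = s := by
    rw [Int.card_Ioc, sub_sub_cancel, Int.toNat_natCast]
  have hterm (k : ℤ) (hk : k ∈ Ioc (n - s) n) :
      ⟪q k, u k - u n⟫ ^ 2 ≤ (n * ‖x - y‖ ^ 2) * (s * W) := by
    have hk' := mem_Ioc.1 hk
    calc ⟪q k, u k - u n⟫ ^ 2 ≤ ‖q k‖ ^ 2 * ‖u k - u n‖ ^ 2 := by
          rw [← mul_pow, ← sq_abs]
          exact pow_le_pow_left₀ (abs_nonneg _) (abs_real_inner_le_norm _ _) 2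
      _ ≤ (n * ‖x - y‖ ^ 2) * (s * W) := by
          have hq : ‖q k‖ ^ 2 ≤ n * ‖x - y‖ ^ 2 :=
            (h.sq_norm_carry_le hy (by omega)).trans
              (mul_le_mul_of_nonneg_right (by exact_mod_cast hk'.2) (sq_nonneg _))
          have hn0 : (0 : ℝ) ≤ n := by exact_mod_cast (by omega : 0 ≤ n)
          exact mul_le_mul hq (Int.sq_norm_sub_le_mul_sum_sq s u hk) (sq_nonneg _) (by positivity)
  calc (∑ k ∈ Ioc (n - s) n, ⟪q k, u k - u n⟫) ^ 2
      ≤ (Ioc (n - s) n).card * ∑ k ∈ Ioc (n - s) n, ⟪q k, u k - u n⟫ ^ 2 :=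
        sq_sum_le_card_mul_sum_sq
    _ ≤ (Ioc (n - s) n).card * ∑ _k ∈ Ioc (n - s) n, (n * ‖x - y‖ ^ 2) * (s * W) := by
        gcongr with k hk
        exact hterm k hk
    _ = s ^ 3 * n * ‖x - y‖ ^ 2 * W := by
        rw [sum_const, nsmul_eq_mul, hcard]
        ring

theorem summable_sumSqSteps (h : IsIteration s C x u q) {y : H}
    (hy : y ∈ ⋂ i ∈ Set.Icc 1 s, C i) :
    Summable (sumSqSteps s u) := by
  refine summable_of_sum_range_le (c := ‖x - y‖ ^ 2) (fun _ => sum_nonneg fun _ _ => sq_nonneg _)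
    fun M => ?_
  suffices ∑ m ∈ range M, sumSqSteps s u m =
      ∑ k ∈ Ioc 0 (s * (M : ℤ)), ‖u (k - 1) - u k‖ ^ 2 from
    this ▸ h.sum_sq_norm_sub_le hy _
  induction M with
  | zero => simp
  | succ M ih =>
    rw [sum_range_succ, ih, sumSqSteps, sum_Ioc_add_sum_Ioc _ (by positivity) (by omega)]
    push_cast
    ring_nf

theorem norm_sub_le (h : IsIteration s C x u q) {y : H} (hy : y ∈ ⋂ i ∈ Set.Icc 1 s, C i)
    {n : ℤ} (hn : 0 ≤ n) : ‖u n - y‖ ≤ ‖x - y‖ := by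
  have hgain := sum_nonneg fun k (hk : k ∈ Ioc 0 n) => h.gain_nonneg (mem_Ioc.1 hk).1
  have := h.sq_norm_sub_le hy hn
  exact (pow_le_pow_iff_left₀ (norm_nonneg _) (norm_nonneg _) two_ne_zero).1 (by linarith)

theorem tendsto_sum_inner_sub_cycle (h : IsIteration s C x u q) {y : H}
    (hy : y ∈ ⋂ i ∈ Set.Icc 1 s, C i) {ψ : ℕ → ℕ}
    (hψ : Tendsto (fun j => (ψ j : ℝ) * sumSqSteps s u (ψ j)) atTop (𝓝 0))
    (hψ' : Tendsto (fun j => sumSqSteps s u (ψ j)) atTop (𝓝 0)) :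
    Tendsto (fun j => ∑ k ∈ Ioc (s * (ψ j : ℤ)) (s * ψ j + s), ⟪q k, u k - u (s * ψ j + s)⟫)
      atTop (𝓝 0) := by
  refine tendsto_zero_of_tendsto_sq (squeeze_zero (fun _ => sq_nonneg _) (fun j => ?_)
    (by simpa using (hψ.add hψ').const_mul ((s : ℝ) ^ 4 * ‖x - y‖ ^ 2)))
  have := h.sq_sum_inner_le hy (n := s * ψ j + s) (le_add_of_nonneg_left (by positivity))
  rw [add_sub_cancel_right] at this
  refine this.trans_eq ?_
  simp only [sumSqSteps]
  push_cast
  ring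

theorem mem_of_forall_tendsto_inner_cycle (h : IsIteration s C x u q) [CompleteSpace H]
    (hC : ∀ i, 1 ≤ i → i ≤ s → IsClosed (C i) ∧ Convex ℝ (C i)) {ψ : ℕ → ℕ}
    (hψ : Tendsto (fun j => sumSqSteps s u (ψ j)) atTop (𝓝 0)) {w : H}
    (hw : ∀ v, Tendsto (fun j => ⟪u (s * ψ j + s), v⟫) atTop (𝓝 ⟪w, v⟫)) :
    w ∈ ⋂ i ∈ Set.Icc 1 s, C i := by
  refine Set.mem_iInter₂.2 fun i ⟨hi, his⟩ => mem_of_forall_tendsto_inner (hC i hi his).1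
    (hC i hi his).2 (y := fun j => u (s * ψ j + i)) (fun j => ?_)
    (forall_tendsto_inner_of_tendsto_sq_norm_sub hw (squeeze_zero (fun _ => sq_nonneg _)
      (fun j => Int.sq_norm_sub_le_mul_sum_sq s u (n := s * ψ j + s) ?_)
      (by simpa only [add_sub_cancel_right, sumSqSteps, mul_zero] using hψ.const_mul (s : ℝ))))
  all_goals have : (0 : ℤ) ≤ s * ψ j := by positivity
  · simpa only [phase_mul_add _ hi his] using h.mem (s * ψ j + i) (by omega)
  · rw [mem_Ioc]
    omega

theorem exists_mem_sq_norm_sub_le (h : IsIteration s C x u q) [CompleteSpace H]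
    (hC : ∀ i, 1 ≤ i → i ≤ s → IsClosed (C i) ∧ Convex ℝ (C i)) {y : H}
    (hy : y ∈ ⋂ i ∈ Set.Icc 1 s, C i) {L : ℝ}
    (hL : Tendsto (fun n => ∑ k ∈ Ioc 0 n, gain s u q k) atTop (𝓝 L)) :
    ∃ w ∈ ⋂ i ∈ Set.Icc 1 s, C i, ‖x - w‖ ^ 2 ≤ L := by
  -- Cycles along which the squared step lengths decay faster than `1 / m`.
  obtain ⟨ψ, hψ, hψv⟩ := exists_strictMono_tendsto_mul_zero
    (fun m => sum_nonneg fun _ _ => sq_nonneg _) (h.summable_sumSqSteps hy)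
  have hvψ := (h.summable_sumSqSteps hy).tendsto_atTop_zero.comp hψ.tendsto_atTop
  set n : ℕ → ℤ := fun j => s * ψ j + s
  have hn : Tendsto n atTop atTop := by
    refine tendsto_atTop_mono (fun j => ?_) (tendsto_natCast_atTop_atTop.comp hψ.tendsto_atTop)
    have : (1 : ℤ) ≤ s := by exact_mod_cast h.pos
    simp only [Function.comp_apply, n]
    nlinarith
  have hnorm : Tendsto (fun j => ‖x - u (n j)‖ ^ 2) atTop (𝓝 L) := by
    have := (hL.comp hn).add ((h.tendsto_sum_inner_sub_cycle hy hψv hvψ).const_mul 2)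
    rw [mul_zero, add_zero] at this
    refine this.congr fun j => ?_
    simp only [Function.comp_apply, n, h.sq_norm_sub_eq (by positivity : 0 ≤ n j),
      add_sub_cancel_right]
  have hbdd (j : ℕ) : ‖u (n j)‖ ≤ ‖x - y‖ + ‖y‖ :=
    (norm_le_norm_sub_add _ y).trans (by linarith [h.norm_sub_le hy (by positivity : 0 ≤ n j)])
  obtain ⟨w, φ, hφ, hw⟩ := exists_strictMono_forall_tendsto_inner hbdd
  refine ⟨w, h.mem_of_forall_tendsto_inner_cycle hC (hvψ.comp hφ.tendsto_atTop) hw, ?_⟩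
  refine sq_norm_le_of_forall_tendsto_inner (y := fun l => x - u (n (φ l))) (fun v => ?_)
    (hnorm.comp hφ.tendsto_atTop)
  simpa only [inner_sub_left] using (hw v).const_sub ⟪x, v⟫

theorem tendsto (h : IsIteration s C x u q) [CompleteSpace H]
    (hC : ∀ i, 1 ≤ i → i ≤ s → IsClosed (C i) ∧ Convex ℝ (C i)) {y : H}
    (hy : y ∈ ⋂ i ∈ Set.Icc 1 s, C i)
    (hmin : ∀ z ∈ ⋂ i ∈ Set.Icc 1 s, C i, dist x y ≤ dist x z) :
    Tendsto u atTop (𝓝 y) := by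
  have hlim := tendsto_atTop_ciSup h.monotone_sum_gain
    ⟨_, Set.forall_mem_range.2 (h.sum_gain_le hy)⟩
  obtain ⟨w, hw, hxw⟩ := h.exists_mem_sq_norm_sub_le hC hy hlim
  have hsup : ⨆ n, ∑ k ∈ Ioc 0 n, gain s u q k = ‖x - y‖ ^ 2 := by
    refine le_antisymm (ciSup_le (h.sum_gain_le hy)) (le_trans ?_ hxw)
    have := hmin w hw
    rw [dist_eq_norm, dist_eq_norm] at this
    gcongr
  have hgap : Tendsto (fun n => ‖x - y‖ ^ 2 - ∑ k ∈ Ioc 0 n, gain s u q k) atTop (𝓝 0) := by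
    have := hlim.const_sub (‖x - y‖ ^ 2)
    rwa [hsup, sub_self] at this
  have hsq : Tendsto (fun n => ‖u n - y‖ ^ 2) atTop (𝓝 0) := by
    refine squeeze_zero' (Eventually.of_forall fun _ => sq_nonneg _) ?_ hgap
    filter_upwards [eventually_ge_atTop 0] with n hn
    exact h.sq_norm_sub_le hy hn
  exact tendsto_iff_norm_sub_tendsto_zero.2 (tendsto_zero_of_tendsto_sq hsq)

theorem of_cycles {P : ℕ → H → H} {X Q : ℕ → ℕ → H} (hs : 0 < s)
    (hC : ∀ i, 1 ≤ i → i ≤ s → Convex ℝ (C i))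
    (hP : ∀ i, 1 ≤ i → i ≤ s → ∀ y, P i y ∈ C i ∧ ∀ z ∈ C i, dist y (P i y) ≤ dist y z)
    (hX0 : X 0 s = x) (hQ0 : ∀ i, 1 ≤ i → i ≤ s → Q 0 i = 0)
    (hcycle : ∀ n, X (n + 1) 0 = X n s)
    (hstep : ∀ n, ∀ i, 1 ≤ i → i ≤ s →
      X (n + 1) i = P i (X (n + 1) (i - 1) + Q n i) ∧
      Q (n + 1) i = X (n + 1) (i - 1) + Q n i - X (n + 1) i) :
    IsIteration s C x (fun k => X (cycle s k) (phase s k)) (fun k => Q (cycle s k) (phase s k)) := by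
  have hprev (n : ℕ) {i : ℕ} (hi : 1 ≤ i) (his : i ≤ s) :
      X (cycle s (s * n + i - 1)) (phase s (s * n + i - 1)) = X (n + 1) (i - 1) := by
    rcases Nat.lt_or_ge 1 i with hi2 | hi2
    · rw [show (s * n + i - 1 : ℤ) = s * n + (i - 1 : ℕ) by push_cast [hi]; ring,
        cycle_natCast_mul_add n (by omega) (by omega), phase_mul_add _ (by omega) (by omega)]
    · obtain rfl : i = 1 := by omega
      rw [show (s * n + (1 : ℕ) - 1 : ℤ) = s * ((n : ℤ) - 1) + s by push_cast; ring,
        cycle_mul_add _ hs le_rfl, phase_mul_add _ hs le_rfl, hcycle]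
      simp
  have hcarry (n : ℕ) {i : ℕ} (hi : 1 ≤ i) (his : i ≤ s) :
      Q (cycle s (s * n + i - s)) (phase s (s * n + i - s)) = Q n i := by
    rw [show (s * n + i - s : ℤ) = s * ((n : ℤ) - 1) + i by ring, cycle_mul_add _ hi his,
      phase_mul_add _ hi his]
    simp
  refine ⟨hs, ?_, fun k hk => ?_, fun k hk => ?_, fun k hk => ?_, fun k hk => ?_⟩
  · rw [show (0 : ℤ) = s * (-1) + s by ring, cycle_mul_add _ hs le_rfl, phase_mul_add _ hs le_rfl]
    exact hX0
  · obtain ⟨n, i, hi, his, rfl⟩ := exists_eq_mul_add hs k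
    have : n + 1 ≤ 0 := by nlinarith
    rw [cycle_mul_add _ hi his, phase_mul_add _ hi his, Int.toNat_of_nonpos this]
    exact hQ0 i hi his
  all_goals obtain ⟨n, i, hi, his, rfl⟩ := exists_nat_eq_mul_add hs hk
  all_goals simp only [hprev n hi his, hcarry n hi his, cycle_natCast_mul_add n hi his,
    phase_mul_add _ hi his]
  · rw [(hstep n i hi his).2]
    abel
  · rw [(hstep n i hi his).1]
    exact (hP i hi his _).1
  · intro z hz
    rw [(hstep n i hi his).2, (hstep n i hi his).1]
    exact inner_sub_nonpos_of_forall_dist_le (hC i hi his) (hP i hi his _).1 (hP i hi his _).2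
      z hz

end IsIteration

end Dykstra

theorem statement9_general {H : Type*} [NormedAddCommGroup H] [InnerProductSpace ℝ H]
    [CompleteSpace H]
    (s : ℕ)
    (C : ℕ → Set H)
    (hC : ∀ i, 1 ≤ i → i ≤ s → IsClosed (C i) ∧ Convex ℝ (C i) ∧ (C i).Nonempty)
    -- P i is the metric projection onto C i, for i ∈ {1, …, s}
    (P : ℕ → H → H)
    (hP : ∀ i, 1 ≤ i → i ≤ s → ∀ y, P i y ∈ C i ∧ ∀ z ∈ C i, dist y (P i y) ≤ dist y z)
    -- PC is the metric projection onto the intersection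
    (PC : H → H)
    (hPC : ∀ y, PC y ∈ ⋂ i ∈ Set.Icc 1 s, C i ∧
      ∀ z ∈ ⋂ i ∈ Set.Icc 1 s, C i, dist y (PC y) ≤ dist y z)
    -- Dykstra's algorithm: X n i is x_n^{(i)}, Q n i is q_n^{(i)}
    (x : H) (X Q : ℕ → ℕ → H)
    (hX0 : X 0 s = x)
    (hQ0 : ∀ i, 1 ≤ i → i ≤ s → Q 0 i = 0)
    (hcycle : ∀ n, X (n + 1) 0 = X n s)
    (hstep : ∀ n, ∀ i, 1 ≤ i → i ≤ s →
      X (n + 1) i = P i (X (n + 1) (i - 1) + Q n i) ∧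
      Q (n + 1) i = X (n + 1) (i - 1) + Q n i - X (n + 1) i) :
    -- each sequence x_n^{(i)} converges in norm to P_C x
    ∀ i, 1 ≤ i → i ≤ s → Tendsto (fun n => X n i) atTop (𝓝 (PC x)) := by
  intro i hi his
  have hs : 0 < s := by omega
  have hiter :=
    Dykstra.IsIteration.of_cycles hs (fun j hj hjs => (hC j hj hjs).2.1) hP hX0 hQ0 hcycle hstep
  have hlim := hiter.tendsto (fun j hj hjs => ⟨(hC j hj hjs).1, (hC j hj hjs).2.1⟩)
    (hPC x).1 (hPC x).2
  have hidx : Tendsto (fun n : ℕ => (s * n + i : ℤ)) atTop atTop :=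
    tendsto_atTop_mono (fun n => by nlinarith) tendsto_natCast_atTop_atTop
  rw [← tendsto_add_atTop_iff_nat 1]
  refine (hlim.comp hidx).congr fun n => ?_
  simp only [Function.comp_apply, Dykstra.cycle_natCast_mul_add _ hi his,
    Dykstra.phase_mul_add _ hi his]

theorem statement9 {H : Type*} [NormedAddCommGroup H] [InnerProductSpace ℝ H]
    [CompleteSpace H]
    (s : ℕ) (hs : 0 < s)
    (C : ℕ → Set H)
    (hC : ∀ i, 1 ≤ i → i ≤ s → IsClosed (C i) ∧ Convex ℝ (C i) ∧ (C i).Nonempty)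
    -- the intersection C = C_1 ∩ ⋯ ∩ C_s is nonempty
    (hint : (⋂ i ∈ Set.Icc 1 s, C i).Nonempty)
    -- P i is the metric projection onto C i, for i ∈ {1, …, s}
    (P : ℕ → H → H)
    (hP : ∀ i, 1 ≤ i → i ≤ s → ∀ y, P i y ∈ C i ∧ ∀ z ∈ C i, dist y (P i y) ≤ dist y z)
    -- PC is the metric projection onto the intersection
    (PC : H → H)
    (hPC : ∀ y, PC y ∈ ⋂ i ∈ Set.Icc 1 s, C i ∧
      ∀ z ∈ ⋂ i ∈ Set.Icc 1 s, C i, dist y (PC y) ≤ dist y z)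
    -- Dykstra's algorithm: X n i is x_n^{(i)}, Q n i is q_n^{(i)}
    (x : H) (X Q : ℕ → ℕ → H)
    (hX0 : X 0 s = x)
    (hQ0 : ∀ i, 1 ≤ i → i ≤ s → Q 0 i = 0)
    (hcycle : ∀ n, X (n + 1) 0 = X n s)
    (hstep : ∀ n, ∀ i, 1 ≤ i → i ≤ s →
      X (n + 1) i = P i (X (n + 1) (i - 1) + Q n i) ∧
      Q (n + 1) i = X (n + 1) (i - 1) + Q n i - X (n + 1) i) :
    -- each sequence x_n^{(i)} converges in norm to P_C x
    ∀ i, 1 ≤ i → i ≤ s → Tendsto (fun n => X n i) atTop (𝓝 (PC x)) :=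
  statement9_general s C hC P hP PC hPC x X Q hX0 hQ0 hcycle hstep
end

section
/- For every horizon L ≥ ℓ, the restricted behavior B_L is a linear subspace of ℝ^{qL} of dimension exactly mL + n. -/
/-!
The restricted behavior is the image of the linear map sending an input sequence
`u ∈ ℝ^(mL)` and an initial state `x(1) ∈ ℝ^n` to the input/output trajectory they generate:
the state equation determines the whole state sequence from `u` and `x(1)`. This map is
injective once `L ≥ ℓ`: a parameter with zero image has `u = 0`, hence its outputs
`C A^t x(1)` vanish for `t < L`, in particular for `t < ℓ`, and the `ℓ`-step observability
matrix has full column rank. So `dim B_L = mL + n`.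
-/
open Filter Topology

noncomputable section DIM

/-- The `k`-step observability matrix col(C, CA, …, CA^(k−1)). -/
def obsvMat (n p k : ℕ) (A : Matrix (Fin n) (Fin n) ℝ) (C : Matrix (Fin p) (Fin n) ℝ) :
    Matrix (Fin k × Fin p) (Fin n) ℝ :=
  fun r j => (C * A ^ (r.1 : ℕ)) r.2 j

/-- The controllability matrix [B, AB, …, A^(n−1)B]. -/
def ctrbMat (n m : ℕ) (A : Matrix (Fin n) (Fin n) ℝ) (B : Matrix (Fin n) (Fin m) ℝ) :
    Matrix (Fin n) (Fin n × Fin m) ℝ :=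
  fun i c => (A ^ (c.1 : ℕ) * B) i c.2

/-- The restricted behavior B_L over the horizon L: stacked input/output
trajectories w, with w(t) = col(u(t), y(t)) ∈ ℝ^(m+p), generated by the
state-space representation (A, B, C, D). A stacked vector in ℝ^(qL), q = m + p,
is identified with a function `Fin L × (Fin m ⊕ Fin p) → ℝ`. -/
def behavior (m n p L : ℕ) (A : Matrix (Fin n) (Fin n) ℝ) (B : Matrix (Fin n) (Fin m) ℝ)
    (C : Matrix (Fin p) (Fin n) ℝ) (D : Matrix (Fin p) (Fin m) ℝ) :
    Set (Fin L × (Fin m ⊕ Fin p) → ℝ) :=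
  {w | ∃ x : Fin (L + 1) → Fin n → ℝ, ∀ t : Fin L,
    x t.succ = A.mulVec (x t.castSucc) + B.mulVec (fun i => w (t, Sum.inl i)) ∧
    (fun j => w (t, Sum.inr j)) =
      C.mulVec (x t.castSucc) + D.mulVec (fun i => w (t, Sum.inl i))}

open scoped Matrix

theorem Matrix.mulVec_injective_of_rank_eq_card {K ι κ : Type*} [Field K] [Fintype ι]
    [Fintype κ] {M : Matrix ι κ K} (hM : M.rank = Fintype.card κ) :
    Function.Injective M.mulVec := by
  have hdim := LinearMap.finrank_range_add_finrank_ker M.mulVecLin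
  rw [← Matrix.rank, hM, Module.finrank_fintype_fun_eq_card] at hdim
  have hker : LinearMap.ker M.mulVecLin = ⊥ := Submodule.finrank_eq_zero.mp (by omega)
  exact LinearMap.ker_eq_bot.mp hker

theorem eq_zero_of_rank_obsvMat_eq {n p k : ℕ} {A : Matrix (Fin n) (Fin n) ℝ}
    {C : Matrix (Fin p) (Fin n) ℝ} (hk : (obsvMat n p k A C).rank = n) {x : Fin n → ℝ}
    (hx : ∀ t < k, (C * A ^ t) *ᵥ x = 0) : x = 0 := by
  refine Matrix.mulVec_injective_of_rank_eq_card (by rwa [Fintype.card_fin]) ?_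
  funext ⟨t, j⟩
  simpa [obsvMat, Matrix.mulVec] using congrFun (hx t t.isLt) j

namespace StateSpace

section

variable {R : Type*} [CommRing R] {m n p L : ℕ}
  (A : Matrix (Fin n) (Fin n) R) (B : Matrix (Fin n) (Fin m) R)
  (C : Matrix (Fin p) (Fin n) R) (D : Matrix (Fin p) (Fin m) R)

abbrev Params (R : Type*) (m n L : ℕ) := (Fin L × Fin m → R) × (Fin n → R)

def inputAt (t : Fin L) : Params R m n L →ₗ[R] Fin m → R :=
  LinearMap.pi fun i => LinearMap.proj (t, i) ∘ₗ LinearMap.fst R _ _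

def stateAt : Fin (L + 1) → Params R m n L →ₗ[R] Fin n → R :=
  Fin.induction (LinearMap.snd R _ _) fun t x => A.mulVecLin ∘ₗ x + B.mulVecLin ∘ₗ inputAt t

def outputAt (t : Fin L) : Params R m n L →ₗ[R] Fin p → R :=
  C.mulVecLin ∘ₗ stateAt A B t.castSucc + D.mulVecLin ∘ₗ inputAt t

def trajectoryMap : Params R m n L →ₗ[R] Fin L × (Fin m ⊕ Fin p) → R :=
  LinearMap.pi fun r => Sum.elim (fun i => LinearMap.proj i ∘ₗ inputAt r.1)
    (fun j => LinearMap.proj j ∘ₗ outputAt A B C D r.1) r.2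

variable {A B C D}

@[simp]
theorem inputAt_apply (t : Fin L) (v : Params R m n L) : inputAt t v = fun i => v.1 (t, i) :=
  rfl

@[simp]
theorem stateAt_zero (v : Params R m n L) : stateAt A B 0 v = v.2 := by
  simp [stateAt]

@[simp]
theorem stateAt_succ (t : Fin L) (v : Params R m n L) :
    stateAt A B t.succ v = A *ᵥ stateAt A B t.castSucc v + B *ᵥ inputAt t v := by
  simp [stateAt]

theorem stateAt_zero_input (t : Fin (L + 1)) (x₀ : Fin n → R) :
    stateAt A B t ((0, x₀) : Params R m n L) = (A ^ (t : ℕ)) *ᵥ x₀ := by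
  induction t using Fin.induction with
  | zero => simp
  | succ t ih =>
    rw [stateAt_succ, ih, inputAt_apply]
    simp [pow_succ', Matrix.mulVec_mulVec, ← Pi.zero_def]

theorem stateAt_eq_of_isTrajectory {x : Fin (L + 1) → Fin n → R} {v : Params R m n L}
    (h₀ : x 0 = v.2) (hx : ∀ t, x t.succ = A *ᵥ x t.castSucc + B *ᵥ inputAt t v)
    (t : Fin (L + 1)) :
    stateAt A B t v = x t := by
  induction t using Fin.induction with
  | zero => simp [h₀]
  | succ t ih => simp [hx, ih]

@[simp]
theorem trajectoryMap_inl (v : Params R m n L) (t : Fin L) (i : Fin m) :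
    trajectoryMap A B C D v (t, .inl i) = v.1 (t, i) :=
  rfl

@[simp]
theorem trajectoryMap_inr (v : Params R m n L) (t : Fin L) (j : Fin p) :
    trajectoryMap A B C D v (t, .inr j) = outputAt A B C D t v j :=
  rfl

end

variable {m n p L : ℕ} {A : Matrix (Fin n) (Fin n) ℝ} {B : Matrix (Fin n) (Fin m) ℝ}
  {C : Matrix (Fin p) (Fin n) ℝ} {D : Matrix (Fin p) (Fin m) ℝ}

theorem range_trajectoryMap :
    (LinearMap.range (trajectoryMap A B C D (L := L)) : Set (Fin L × (Fin m ⊕ Fin p) → ℝ)) =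
      behavior m n p L A B C D := by
  ext w
  constructor
  · rintro ⟨v, rfl⟩
    refine ⟨fun t => stateAt A B t v, fun t => ⟨stateAt_succ t v, ?_⟩⟩
    funext j
    simp [outputAt]
  · rintro ⟨x, hx⟩
    set v : Params ℝ m n L := (fun r => w (r.1, .inl r.2), x 0)
    have hstate : ∀ t, stateAt A B t v = x t :=
      stateAt_eq_of_isTrajectory rfl fun t => (hx t).1
    refine ⟨v, funext fun ⟨t, s⟩ => ?_⟩
    cases s with
    | inl i => rfl
    | inr j => simpa [outputAt, hstate] using (congrFun (hx t).2 j).symm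

theorem trajectoryMap_injective {k : ℕ} (hk : (obsvMat n p k A C).rank = n) (hkL : k ≤ L) :
    Function.Injective (trajectoryMap A B C D : Params ℝ m n L → _) := by
  rw [← LinearMap.ker_eq_bot, LinearMap.ker_eq_bot']
  rintro ⟨u, x₀⟩ hw
  obtain rfl : u = 0 := funext fun r => congrFun hw (r.1, .inl r.2)
  refine Prod.ext rfl (eq_zero_of_rank_obsvMat_eq hk fun t ht => funext fun j => ?_)
  simpa [outputAt, stateAt_zero_input, Matrix.mulVec_mulVec, ← Pi.zero_def]
    using congrFun hw (⟨t, ht.trans_le hkL⟩, .inr j)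

end StateSpace

theorem statement12_general
    (m n p : ℕ)
    (A : Matrix (Fin n) (Fin n) ℝ) (B : Matrix (Fin n) (Fin m) ℝ)
    (C : Matrix (Fin p) (Fin n) ℝ) (D : Matrix (Fin p) (Fin m) ℝ)
    -- ℓ is the lag: the least positive k with rank col(C, …, CA^(k−1)) = n
    (ℓ : ℕ) (hlag : IsLeast {k : ℕ | 0 < k ∧ (obsvMat n p k A C).rank = n} ℓ)
    -- horizon L ≥ ℓ
    (L : ℕ) (hL : ℓ ≤ L) :
    -- B_L is a linear subspace of ℝ^(qL) of dimension mL + n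
    ∃ S : Submodule ℝ (Fin L × (Fin m ⊕ Fin p) → ℝ),
      (S : Set (Fin L × (Fin m ⊕ Fin p) → ℝ)) = behavior m n p L A B C D ∧
      Module.finrank ℝ S = m * L + n := by
  refine ⟨LinearMap.range (StateSpace.trajectoryMap A B C D),
    StateSpace.range_trajectoryMap, ?_⟩
  rw [LinearMap.finrank_range_of_inj (StateSpace.trajectoryMap_injective hlag.1.2 hL)]
  simp [mul_comm]

theorem statement12
    (m n p : ℕ) (hm : 0 < m) (hn : 0 < n) (hp : 0 < p)
    (A : Matrix (Fin n) (Fin n) ℝ) (B : Matrix (Fin n) (Fin m) ℝ)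
    (C : Matrix (Fin p) (Fin n) ℝ) (D : Matrix (Fin p) (Fin m) ℝ)
    -- (A,C) observable
    (hobsv : (obsvMat n p n A C).rank = n)
    -- ℓ is the lag: the least positive k with rank col(C, …, CA^(k−1)) = n
    (ℓ : ℕ) (hlag : IsLeast {k : ℕ | 0 < k ∧ (obsvMat n p k A C).rank = n} ℓ)
    -- horizon L ≥ ℓ
    (L : ℕ) (hL : ℓ ≤ L) :
    -- B_L is a linear subspace of ℝ^(qL) of dimension mL + n
    ∃ S : Submodule ℝ (Fin L × (Fin m ⊕ Fin p) → ℝ),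
      (S : Set (Fin L × (Fin m ⊕ Fin p) → ℝ)) = behavior m n p L A B C D ∧
      Module.finrank ℝ S = m * L + n :=
  statement12_general m n p A B C D ℓ hlag L hL

end DIM
end
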